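/- arXiv:1208.3348 — 7 statements merged into one kernel-verified Lean document; each statement's English description precedes it below -/
import Mathlib

section
/- Let (X,T) be a Cantor minimal system equipped with a proper nested Kakutani–Rohlin structure, let α ∈ ℝ and λ = exp(2iπα). Then the following are equivalent: (1) λ is a continuous eigenvalue of (X,T); (2) the sequence of functions x ↦ λ^{r_n(x)} converges uniformly on X as n → ∞ (equivalently, the sequence (α·r_n(x) mod ℤ; n ≥ 1) converges uniformly in x ∈ X). -/
open MeasureTheory Filter Topology Set Pointwise

noncomputable section

variable {X : Type} [TopologicalSpace X]

/-- The (two-sided) orbit of a point under a homeomorphism. -/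
def HOrbit (T : X ≃ₜ X) (x : X) : Set X :=
  {y : X | ∃ n : ℕ, (T : X → X)^[n] x = y ∨ (T.symm : X → X)^[n] x = y}

/-- `(X,T)` is a Cantor minimal system. -/
def CantorMinimal (T : X ≃ₜ X) : Prop :=
  CompactSpace X ∧ TopologicalSpace.MetrizableSpace X ∧ TotallyDisconnectedSpace X ∧
    Nonempty X ∧ (∀ x : X, (𝓝[≠] x).NeBot) ∧ ∀ x : X, Dense (HOrbit T x)

/-- Entry `M(n)_{k,l}` of the incidence matrix of a Kakutani-Rohlin structure:
the number of `0 ≤ j < h_k(n)` with `T^{-j}B_k(n) ⊆ B_l(n-1)`. -/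
def KRmat (T : X ≃ₜ X) (B : ℕ → ℕ → Set X) (h : ℕ → ℕ → ℕ) (n k l : ℕ) : ℕ :=
  Nat.card {j : ℕ // j < h n k ∧ (T : X → X)^[j] ⁻¹' (B n k) ⊆ B (n - 1) l}

/-- A proper nested Kakutani-Rohlin structure on `(X,T)` with tower bases `B k n`
(`1 ≤ k ≤ C n`) and heights `h n k`. -/
structure KRStruct (T : X ≃ₜ X) (C : ℕ → ℕ) (B : ℕ → ℕ → Set X) (h : ℕ → ℕ → ℕ) : Prop where
  C_pos : ∀ n, 1 ≤ n → 1 ≤ C n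
  B_nonempty : ∀ n k, 1 ≤ n → 1 ≤ k → k ≤ C n → (B n k).Nonempty
  B_clopen : ∀ n k, 1 ≤ n → 1 ≤ k → k ≤ C n → IsClopen (B n k)
  h_pos : ∀ n k, 1 ≤ n → 1 ≤ k → k ≤ C n → 1 ≤ h n k
  h_one : ∀ k, 1 ≤ k → k ≤ C 1 → h 1 k = 1
  towers_disjoint : ∀ n, 1 ≤ n → ∀ k j k' j', 1 ≤ k → k ≤ C n → j < h n k →
    1 ≤ k' → k' ≤ C n → j' < h n k' → (k, j) ≠ (k', j') →
    Disjoint ((T : X → X)^[j] ⁻¹' B n k) ((T : X → X)^[j'] ⁻¹' B n k')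
  towers_cover : ∀ n, 1 ≤ n →
    (⋃ k ∈ Set.Icc 1 (C n), ⋃ j ∈ Set.Iio (h n k), (T : X → X)^[j] ⁻¹' B n k) = Set.univ
  nested : ∀ n, 1 ≤ n → ∀ k, 1 ≤ k → k ≤ C (n + 1) → ∀ j, j < h (n + 1) k →
    ∃ l i, 1 ≤ l ∧ l ≤ C n ∧ i < h n l ∧
      (T : X → X)^[j] ⁻¹' B (n + 1) k ⊆ (T : X → X)^[i] ⁻¹' B n l
  bases_nested : ∀ n, 1 ≤ n →
    (⋃ k ∈ Set.Icc 1 (C (n + 1)), B (n + 1) k) ⊆ ⋃ k ∈ Set.Icc 1 (C n), B n k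
  inter_singleton : ∃ x₀ : X,
    (⋂ n ∈ {n : ℕ | 1 ≤ n}, ⋃ k ∈ Set.Icc 1 (C n), B n k) = {x₀}
  clopen_gen : ∀ U : Set X, IsClopen U → ∃ n, 1 ≤ n ∧ ∃ S : Set (ℕ × ℕ),
    (∀ p ∈ S, 1 ≤ p.1 ∧ p.1 ≤ C n ∧ p.2 < h n p.1) ∧
    U = ⋃ p ∈ S, (T : X → X)^[p.2] ⁻¹' B n p.1
  mat_pos : ∀ n, 2 ≤ n → ∀ k l, 1 ≤ k → k ≤ C n → 1 ≤ l → l ≤ C (n - 1) →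
    1 ≤ KRmat T B h n k l
  h_rec : ∀ n, 2 ≤ n → ∀ k, 1 ≤ k → k ≤ C n →
    h n k = ∑ l ∈ Finset.Icc 1 (C (n - 1)), KRmat T B h n k l * h (n - 1) l

/-- `λ` is a continuous eigenvalue of `(X,T)`. -/
def ContEigenvalue (T : X ≃ₜ X) (lam : ℂ) : Prop :=
  ∃ f : X → ℂ, Continuous f ∧ f ≠ 0 ∧ ∀ x, f (T x) = lam * f x

/-- `λ` is a measurable eigenvalue of `(X,T,μ)`. -/
def MeasEigenvalue [MeasurableSpace X] (T : X ≃ₜ X) (μ : Measure X) (lam : ℂ) : Prop :=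
  ∃ f : X → ℂ, MemLp f 2 μ ∧ ¬ (f =ᵐ[μ] (fun _ => (0 : ℂ))) ∧
    (fun x => f (T x)) =ᵐ[μ] fun x => lam * f x

/-- The return time `r_n(x)` to the union of the bases of the level-`n` towers. -/
def rtime (T : X ≃ₜ X) (C : ℕ → ℕ) (B : ℕ → ℕ → Set X) (n : ℕ) (x : X) : ℕ :=
  sInf {j : ℕ | (T : X → X)^[j] x ∈ ⋃ k ∈ Set.Icc 1 (C n), B n k}

/-- `τ_n(x)`: the index of the level-`n` tower containing `x`. -/
def tau (T : X ≃ₜ X) (C : ℕ → ℕ) (B : ℕ → ℕ → Set X) (h : ℕ → ℕ → ℕ) (n : ℕ) (x : X) : ℕ :=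
  sInf {k : ℕ | 1 ≤ k ∧ k ≤ C n ∧ ∃ j < h n k, (T : X → X)^[j] x ∈ B n k}

/-- The suffix vector `s_n(x)`: its `l`-th coordinate counts the
`r_n(x) < j ≤ r_{n+1}(x)` with `T^j x ∈ B_l(n)`. -/
def suffix (T : X ≃ₜ X) (C : ℕ → ℕ) (B : ℕ → ℕ → Set X) (n : ℕ) (x : X) (l : ℕ) : ℕ :=
  Nat.card {j : ℕ // rtime T C B n x < j ∧ j ≤ rtime T C B (n + 1) x ∧
    (T : X → X)^[j] x ∈ B n l}

/-- The action of the incidence matrix `M(n)` on a real vector. -/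
def applyM (T : X ≃ₜ X) (C : ℕ → ℕ) (B : ℕ → ℕ → Set X) (h : ℕ → ℕ → ℕ)
    (n : ℕ) (v : ℕ → ℝ) : ℕ → ℝ :=
  fun k => ∑ l ∈ Finset.Icc 1 (C (n - 1)), (KRmat T B h n k l : ℝ) * v l

/-- The action of `P(n,m) = M(n)⋯M(m+1)` on a real vector (`P(n,m) = Id` for `n ≤ m`). -/
def applyP (T : X ≃ₜ X) (C : ℕ → ℕ) (B : ℕ → ℕ → Set X) (h : ℕ → ℕ → ℕ)
    (m : ℕ) (v : ℕ → ℝ) : ℕ → ℕ → ℝ :=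
  fun n => Nat.rec (motive := fun _ => ℕ → ℝ) v
    (fun j ih => if j + 1 ≤ m then v else applyM T C B h (j + 1) ih) n

/-- `P(n,m) v → 0` as `n → ∞` (uniformly over the coordinates `1 ≤ k ≤ C n`). -/
def PtendsZero (T : X ≃ₜ X) (C : ℕ → ℕ) (B : ℕ → ℕ → Set X) (h : ℕ → ℕ → ℕ)
    (m : ℕ) (v : ℕ → ℝ) : Prop :=
  ∀ ε : ℝ, 0 < ε → ∀ᶠ n in atTop, ∀ k, 1 ≤ k → k ≤ C n →
    |applyP T C B h m v n k| < ε


section AuxKR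

variable (T : X ≃ₜ X) (C : ℕ → ℕ) (B : ℕ → ℕ → Set X) (h : ℕ → ℕ → ℕ)

lemma exists_mem_S (hKR : KRStruct T C B h) {n : ℕ} (hn : 1 ≤ n) (x : X) :
    ∃ j : ℕ, (T : X → X)^[j] x ∈ ⋃ k ∈ Set.Icc 1 (C n), B n k := by
  have hx : x ∈ (⋃ k ∈ Set.Icc 1 (C n), ⋃ j ∈ Set.Iio (h n k), (T : X → X)^[j] ⁻¹' B n k) := by
    rw [hKR.towers_cover n hn]; exact Set.mem_univ x
  simp only [Set.mem_iUnion, Set.mem_preimage, exists_prop] at hx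
  obtain ⟨k, hk, j, _, hxj⟩ := hx
  exact ⟨j, Set.mem_biUnion hk hxj⟩

lemma rtime_mem (hKR : KRStruct T C B h) {n : ℕ} (hn : 1 ≤ n) (x : X) :
    (T : X → X)^[rtime T C B n x] x ∈ ⋃ k ∈ Set.Icc 1 (C n), B n k :=
  Nat.sInf_mem (exists_mem_S T C B h hKR hn x)

lemma rtime_eq (hKR : KRStruct T C B h) {n k j : ℕ} (hn : 1 ≤ n) (hk1 : 1 ≤ k)
    (hk2 : k ≤ C n) (hj : j < h n k) {y : X} (hy : (T : X → X)^[j] y ∈ B n k) :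
    rtime T C B n y = j := by
  have hjS : j ∈ {i : ℕ | (T : X → X)^[i] y ∈ ⋃ k ∈ Set.Icc 1 (C n), B n k} :=
    Set.mem_biUnion ⟨hk1, hk2⟩ hy
  refine le_antisymm (Nat.sInf_le hjS) ?_
  have hmem : rtime T C B n y ∈
      {i : ℕ | (T : X → X)^[i] y ∈ ⋃ k ∈ Set.Icc 1 (C n), B n k} :=
    Nat.sInf_mem ⟨j, hjS⟩
  set i := rtime T C B n y with hi
  by_contra hlt
  push_neg at hlt
  simp only [Set.mem_setOf_eq, Set.mem_iUnion, exists_prop] at hmem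
  obtain ⟨l, ⟨hl1, hl2⟩, hw⟩ := hmem
  have hw1 : (T : X → X)^[i] y ∈ (T : X → X)^[j - i] ⁻¹' B n k := by
    simp only [Set.mem_preimage, ← Function.iterate_add_apply]
    rwa [Nat.sub_add_cancel hlt.le]
  have hw2 : (T : X → X)^[i] y ∈ (T : X → X)^[0] ⁻¹' B n l := by
    simpa using hw
  have hne : (k, j - i) ≠ (l, 0) := by
    intro hcon
    have : j - i = 0 := congrArg Prod.snd hcon
    omega
  exact (hKR.towers_disjoint n hn k (j - i) l 0 hk1 hk2
    (lt_of_le_of_lt (Nat.sub_le j i) hj) hl1 hl2 (hKR.h_pos n l hn hl1 hl2) hne).le_bot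
    ⟨hw1, hw2⟩

lemma cont_F (hKR : KRStruct T C B h) (lam : ℂ) {n : ℕ} (hn : 1 ≤ n) :
    Continuous fun x => lam ^ rtime T C B n x := by
  rw [continuous_iff_continuousAt]
  intro x
  have hx : x ∈ (⋃ k ∈ Set.Icc 1 (C n), ⋃ j ∈ Set.Iio (h n k), (T : X → X)^[j] ⁻¹' B n k) := by
    rw [hKR.towers_cover n hn]; exact Set.mem_univ x
  simp only [Set.mem_iUnion, Set.mem_preimage, exists_prop, Set.mem_Iio] at hx
  obtain ⟨k, ⟨hk1, hk2⟩, j, hj, hxj⟩ := hx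
  have hopen : IsOpen ((T : X → X)^[j] ⁻¹' B n k) :=
    ((hKR.B_clopen n k hn hk1 hk2).preimage (T.continuous.iterate j)).isOpen
  have hmem : (T : X → X)^[j] ⁻¹' B n k ∈ 𝓝 x := hopen.mem_nhds hxj
  have hev : (fun y => lam ^ rtime T C B n y) =ᶠ[𝓝 x] fun _ => lam ^ j :=
    Filter.eventuallyEq_of_mem hmem fun y hy => by
      rw [rtime_eq T C B h hKR hn hk1 hk2 hj hy]
  exact hev.continuousAt

lemma rtime_T (hKR : KRStruct T C B h) {n : ℕ} (hn : 1 ≤ n) {x : X}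
    (hx : x ∉ ⋃ k ∈ Set.Icc 1 (C n), B n k) :
    rtime T C B n x = rtime T C B n (T x) + 1 := by
  set S : Set ℕ := {j : ℕ | (T : X → X)^[j] x ∈ ⋃ k ∈ Set.Icc 1 (C n), B n k} with hS
  set S' : Set ℕ := {j : ℕ | (T : X → X)^[j] (T x) ∈ ⋃ k ∈ Set.Icc 1 (C n), B n k} with hS'
  have hSne : S.Nonempty := exists_mem_S T C B h hKR hn x
  have hmS : sInf S ∈ S := Nat.sInf_mem hSne
  have hm0 : sInf S ≠ 0 := by
    intro hcon
    rw [hcon] at hmS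
    simp only [hS, Set.mem_setOf_eq, Function.iterate_zero_apply] at hmS
    exact hx hmS
  have hkey : ∀ j : ℕ, j ∈ S' ↔ j + 1 ∈ S := by
    intro j
    simp only [hS, hS', Set.mem_setOf_eq, ← Function.iterate_succ_apply]
  have h1 : sInf S - 1 ∈ S' := by
    rw [hkey]
    rwa [Nat.sub_add_cancel (Nat.one_le_iff_ne_zero.mpr hm0)]
  have h2 : sInf S' = sInf S - 1 := by
    refine le_antisymm (Nat.sInf_le h1) ?_
    have : sInf S' ∈ S' := Nat.sInf_mem ⟨_, h1⟩
    have : sInf S' + 1 ∈ S := (hkey _).mp this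
    have := Nat.sInf_le this
    omega
  show sInf S = sInf S' + 1
  omega

lemma Anested (hKR : KRStruct T C B h) {n : ℕ} (hn : 1 ≤ n) {m : ℕ} (hm : n ≤ m) :
    (⋃ k ∈ Set.Icc 1 (C m), B m k) ⊆ ⋃ k ∈ Set.Icc 1 (C n), B n k := by
  induction m with
  | zero => omega
  | succ m ih =>
    rcases Nat.lt_or_ge n (m + 1) with h1 | h2
    · have hnm : n ≤ m := by omega
      exact (hKR.bases_nested m (le_trans hn hnm)).trans (ih hnm)
    · have : n = m + 1 := le_antisymm hm h2
      subst this
      exact subset_rfl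

lemma shrink (hKR : KRStruct T C B h) [CompactSpace X] {x₀ : X}
    (hx₀ : (⋂ n ∈ {n : ℕ | 1 ≤ n}, ⋃ k ∈ Set.Icc 1 (C n), B n k) = {x₀})
    {U : Set X} (hU : IsOpen U) (hx₀U : x₀ ∈ U) :
    ∃ N : ℕ, ∀ n, N ≤ n → (⋃ k ∈ Set.Icc 1 (C n), B n k) ⊆ U := by
  set V : ℕ → Set X := fun m => ⋃ k ∈ Set.Icc 1 (C (m + 1)), B (m + 1) k with hV
  have hVc : ∀ m, IsClosed (V m) := fun m =>
    Set.Finite.isClosed_biUnion (Set.finite_Icc _ _)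
      fun k hk => (hKR.B_clopen (m + 1) k (Nat.le_add_left 1 m) hk.1 hk.2).isClosed
  have hanti : ∀ i j : ℕ, i ≤ j → V j ⊆ V i := fun i j hij =>
    Anested T C B h hKR (Nat.le_add_left 1 i) (by omega)
  have hdir : Directed (· ⊇ ·) V := fun i j =>
    ⟨max i j, hanti i _ (le_max_left i j), hanti j _ (le_max_right i j)⟩
  have hInt : (⋂ m, V m) = {x₀} := by
    rw [← hx₀]
    ext x
    simp only [Set.mem_iInter, Set.mem_setOf_eq, hV]
    constructor
    · intro H n hn
      have := H (n - 1)
      rwa [Nat.sub_add_cancel hn] at this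
    · intro H m
      exact H (m + 1) (Nat.le_add_left 1 m)
  obtain ⟨m, hm⟩ := exists_subset_nhds_of_isCompact' hdir
    (fun m => (hVc m).isCompact) hVc
    (fun x hx => by
      rw [hInt] at hx
      rw [Set.mem_singleton_iff] at hx
      subst hx
      exact hU.mem_nhds hx₀U)
  exact ⟨m + 1, fun n hn => (Anested T C B h hKR (Nat.le_add_left 1 m) hn).trans hm⟩

end AuxKR

/-- Proposition 3.1: `exp(2iπα)` is a continuous eigenvalue of a Cantor minimal system
`(X,T)` with a proper nested KR structure iff `x ↦ λ^{r_n(x)}` converges uniformly. -/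
theorem continuous_eigenvalue_iff_uniform_convergence
    {X : Type} [TopologicalSpace X] (T : X ≃ₜ X) (hCM : CantorMinimal T)
    (C : ℕ → ℕ) (B : ℕ → ℕ → Set X) (h : ℕ → ℕ → ℕ) (hKR : KRStruct T C B h)
    (α : ℝ) (lam : ℂ) (hlam : lam = Complex.exp (2 * Real.pi * Complex.I * α)) :
    ContEigenvalue T lam ↔
      ∃ g : X → ℂ, TendstoUniformly (fun n x => lam ^ rtime T C B n x) g atTop := by
  haveI : CompactSpace X := hCM.1
  obtain ⟨x₀, hx₀⟩ := hKR.inter_singleton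
  have hlam' : lam = Complex.exp ((2 * Real.pi * α : ℝ) * Complex.I) := by
    rw [hlam]; push_cast; ring_nf
  have hlam1 : norm lam = 1 := by
    rw [hlam', Complex.norm_exp_ofReal_mul_I]
  have hlamne : lam ≠ 0 := by
    rw [hlam]; exact Complex.exp_ne_zero _
  constructor
  · rintro ⟨f, hfc, hf0, hfT⟩
    have hiter : ∀ (j : ℕ) (x : X), f ((T : X → X)^[j] x) = lam ^ j * f x := by
      intro j
      induction j with
      | zero => intro x; simp
      | succ j ih =>
        intro x
        rw [Function.iterate_succ_apply', hfT, ih, pow_succ]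
        ring
    obtain ⟨z, hz⟩ : ∃ z, f z ≠ 0 := Function.ne_iff.mp hf0
    have horb : Set.EqOn (fun y => norm (f y)) (fun _ => norm (f z))
        (HOrbit T z) := by
      rintro y ⟨m, hm | hm⟩
      · simp only [← hm, hiter m z, norm_mul, norm_pow, hlam1, one_pow, one_mul]
      · subst hm
        induction m with
        | zero => simp
        | succ m ih =>
          show norm (f ((T.symm : X → X)^[m + 1] z)) = norm (f z)
          have hw : f ((T : X → X) ((T.symm : X → X)^[m + 1] z)) =
              lam * f ((T.symm : X → X)^[m + 1] z) := hfT _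
          rw [Function.iterate_succ_apply'] at hw ⊢
          rw [T.apply_symm_apply] at hw
          have : norm (f ((T.symm : X → X)^[m] z)) =
              norm lam * norm (f ((T.symm : X → X) ((T.symm : X → X)^[m] z))) := by
            rw [← norm_mul, ← hw]
          simp only [hlam1, one_mul] at this
          rw [← this]
          exact ih
    have habsf : ∀ x, norm (f x) = norm (f z) := by
      have := Continuous.ext_on (hCM.2.2.2.2.2 z)
        (continuous_norm.comp hfc) continuous_const horb
      exact fun x => congrFun this x
    have hcpos : 0 < norm (f z) := by
      simpa using hz
    have hfx : ∀ x, f x ≠ 0 := by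
      intro x hx
      have h0 := habsf x
      rw [hx, norm_zero] at h0
      exact hz (norm_eq_zero.mp h0.symm)
    refine ⟨fun x => f x₀ * (f x)⁻¹, ?_⟩
    rw [Metric.tendstoUniformly_iff]
    intro ε hε
    set U : Set X := (fun y => norm (f y - f x₀)) ⁻¹' (Set.Iio (ε * norm (f z)))
      with hUdef
    have hUopen : IsOpen U := by
      apply IsOpen.preimage _ isOpen_Iio
      exact continuous_norm.comp (hfc.sub continuous_const)
    have hx₀U : x₀ ∈ U := by
      simp only [hUdef, Set.mem_preimage, Set.mem_Iio, sub_self, norm_zero]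
      positivity
    obtain ⟨N, hN⟩ := shrink T C B h hKR hx₀ hUopen hx₀U
    filter_upwards [eventually_ge_atTop (max N 1)] with n hn x
    have hn1 : 1 ≤ n := le_trans (le_max_right N 1) hn
    have hrt := rtime_mem T C B h hKR hn1 x
    have hrU : (T : X → X)^[rtime T C B n x] x ∈ U :=
      hN n (le_trans (le_max_left N 1) hn) hrt
    simp only [hUdef, Set.mem_preimage, Set.mem_Iio] at hrU
    set r := rtime T C B n x with hr
    have key : lam ^ r = f ((T : X → X)^[r] x) * (f x)⁻¹ := by
      rw [hiter r x, mul_assoc, mul_inv_cancel₀ (hfx x), mul_one]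
    rw [Complex.dist_eq, key, ← sub_mul, norm_mul, norm_inv, habsf x]
    rw [norm_sub_rev] at hrU
    calc norm (f x₀ - f ((T : X → X)^[r] x)) * (norm (f z))⁻¹
        < (ε * norm (f z)) * (norm (f z))⁻¹ :=
          mul_lt_mul_of_pos_right hrU (inv_pos.mpr hcpos)
      _ = ε := by field_simp
  · rintro ⟨g, hg⟩
    have hgc : Continuous g :=
      hg.continuous ((eventually_ge_atTop 1).mono fun n hn => cont_F T C B h hKR lam hn).frequently
    have hgabs : ∀ x, norm (g x) = 1 := by
      intro x
      have h1 : Tendsto (fun n => norm (lam ^ rtime T C B n x)) atTop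
          (𝓝 (norm (g x))) :=
        (continuous_norm.tendsto _).comp (hg.tendsto_at x)
      have h2 : (fun n => norm (lam ^ rtime T C B n x)) = fun _ => 1 :=
        funext fun n => by rw [norm_pow, hlam1, one_pow]
      rw [h2] at h1
      exact tendsto_nhds_unique h1 tendsto_const_nhds
    have hgne : ∀ x, g x ≠ 0 := by
      intro x hx
      have := hgabs x
      rw [hx] at this
      simp at this
    have heq : ∀ x, g x = lam * g (T x) := by
      have hdense : Dense ({x₀}ᶜ : Set X) := by
        haveI := hCM.2.2.2.2.1 x₀
        exact dense_compl_singleton x₀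
      have hcl : Set.EqOn g (fun x => lam * g (T x)) ({x₀}ᶜ : Set X) := by
        intro x hx
        have hxne : x ≠ x₀ := hx
        have hex : ∃ m, 1 ≤ m ∧ x ∉ ⋃ k ∈ Set.Icc 1 (C m), B m k := by
          by_contra hcon
          push_neg at hcon
          have hx' : x ∈ ⋂ n ∈ {n : ℕ | 1 ≤ n}, ⋃ k ∈ Set.Icc 1 (C n), B n k := by
            simp only [Set.mem_iInter, Set.mem_setOf_eq]
            exact fun n hn => hcon n hn
          rw [hx₀] at hx'
          exact hxne hx'
        obtain ⟨m, hm1, hmx⟩ := hex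
        have hEv : ∀ᶠ n in atTop,
            (fun n => lam * lam ^ rtime T C B n (T x)) n =
            (fun n => lam ^ rtime T C B n x) n := by
          filter_upwards [eventually_ge_atTop m] with n hn
          have hxn : x ∉ ⋃ k ∈ Set.Icc 1 (C n), B n k :=
            fun hmem => hmx (Anested T C B h hKR hm1 hn hmem)
          rw [rtime_T T C B h hKR (le_trans hm1 hn) hxn, pow_succ, mul_comm]
        have t1 : Tendsto (fun n => lam ^ rtime T C B n x) atTop (𝓝 (g x)) :=
          hg.tendsto_at x
        have t2 : Tendsto (fun n => lam * lam ^ rtime T C B n (T x)) atTop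
            (𝓝 (lam * g (T x))) := (hg.tendsto_at (T x)).const_mul lam
        exact tendsto_nhds_unique t1 (Filter.Tendsto.congr' hEv t2)
      have := Continuous.ext_on hdense hgc
        (continuous_const.mul (hgc.comp T.continuous)) hcl
      exact fun x => congrFun this x
    refine ⟨fun x => (g x)⁻¹, hgc.inv₀ hgne, ?_, ?_⟩
    · obtain ⟨x⟩ := hCM.2.2.2.1
      intro hcon
      exact inv_ne_zero (hgne x) (congrFun hcon x)
    · intro x
      show (g (T x))⁻¹ = lam * (g x)⁻¹
      rw [heq x, mul_inv, ← mul_assoc, mul_inv_cancel₀ hlamne, one_mul]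


end
end

section
/- Let (X,T) be a Cantor minimal system equipped with a proper nested Kakutani–Rohlin structure and let λ ∈ ℂ with |λ| = 1. If λ is a continuous eigenvalue of (X,T), then max_{1 ≤ k ≤ C(n)} |λ^{h_k(n)} − 1| → 0 as n → ∞; that is, λ^{h_{j_n}(n)} → 1 uniformly over all sequences (j_n; n ≥ 1) with j_n ∈ {1,…,C(n)}. -/
open MeasureTheory Filter Topology Set Pointwise

noncomputable section

variable {X : Type} [TopologicalSpace X]

/-- Corollary 3.2: if `λ` (of modulus one) is a continuous eigenvalue of `(X,T)`,
then `λ^{h_k(n)} → 1` uniformly over `1 ≤ k ≤ C(n)`. -/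
theorem continuous_eigenvalue_heights_tendsto_one
    {X : Type} [TopologicalSpace X] (T : X ≃ₜ X) (hCM : CantorMinimal T)
    (C : ℕ → ℕ) (B : ℕ → ℕ → Set X) (h : ℕ → ℕ → ℕ) (hKR : KRStruct T C B h)
    (lam : ℂ) (hmod : ‖lam‖ = 1) (heig : ContEigenvalue T lam) :
    ∀ ε : ℝ, 0 < ε → ∀ᶠ n in atTop, ∀ k, 1 ≤ k → k ≤ C n →
      ‖lam ^ h n k - 1‖ < ε := by
  intro ε hε
  obtain ⟨f, hfc, hf0, hfe⟩ := heig
  -- iteration formula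
  have iter : ∀ (m : ℕ) (y : X), f ((T : X → X)^[m] y) = lam ^ m * f y := by
    intro m
    induction m with
    | zero => intro y; simp
    | succ m ih =>
      intro y
      rw [Function.iterate_succ_apply', hfe, ih, pow_succ]
      ring
  -- modulus of f is constant
  obtain ⟨x₁, hx₁⟩ : ∃ x, f x ≠ 0 := Function.ne_iff.mp hf0
  set c := ‖f x₁‖ with hc
  have hcpos : 0 < c := by
    simpa [hc] using (norm_pos_iff.mpr hx₁)
  have habs : ∀ x, ‖f x‖ = c := by
    have hdense := hCM.2.2.2.2.2 x₁
    have horb : Set.EqOn (fun x => ‖f x‖) (fun _ => c) (HOrbit T x₁) := by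
      intro y hy
      obtain ⟨n, hn | hn⟩ := hy
      · have : ‖f ((T : X → X)^[n] x₁)‖ = c := by
          rw [iter n x₁, norm_mul, norm_pow, hmod, one_pow, one_mul]
        simpa [hn] using this
      · have key : ∀ m : ℕ, ‖f ((T.symm : X → X)^[m] x₁)‖ = c := by
          intro m
          induction m with
          | zero => simp [hc]
          | succ m ih =>
            have h1 : (T : X → X) ((T.symm : X → X)^[m + 1] x₁) =
                (T.symm : X → X)^[m] x₁ := by
              rw [Function.iterate_succ_apply']
              exact T.apply_symm_apply _
            have h2 : f ((T.symm : X → X)^[m] x₁) =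
                lam * f ((T.symm : X → X)^[m + 1] x₁) := by
              rw [← h1, hfe]
            have := congrArg (‖·‖) h2
            rw [ih, norm_mul, hmod, one_mul] at this
            exact this.symm
        simpa [hn] using key n
    have := Continuous.ext_on hdense (continuous_norm.comp hfc) continuous_const horb
    intro x
    exact congrFun this x
  -- the intersection point
  obtain ⟨x₀, hx₀⟩ := hKR.inter_singleton
  set U : ℕ → Set X := fun n => ⋃ k ∈ Set.Icc 1 (C n), B n k with hU
  have hx₀U : ∀ n, 1 ≤ n → x₀ ∈ U n := by
    intro n hn
    have : x₀ ∈ (⋂ n ∈ {n : ℕ | 1 ≤ n}, ⋃ k ∈ Set.Icc 1 (C n), B n k) := by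
      rw [hx₀]; exact rfl
    exact Set.mem_iInter₂.mp this n hn
  -- U is clopen
  have hUclopen : ∀ n, 1 ≤ n → IsClopen (U n) := by
    intro n hn
    apply Set.Finite.isClopen_biUnion (Set.finite_Icc 1 (C n))
    intro k hk
    exact hKR.B_clopen n k hn hk.1 hk.2
  -- U is antitone (on n ≥ 1)
  have hUanti : ∀ n, 1 ≤ n → ∀ m, n ≤ m → U m ⊆ U n := by
    intro n hn m hm
    induction m, hm using Nat.le_induction with
    | base => exact subset_rfl
    | succ m hm ih => exact (hKR.bases_nested m (le_trans hn hm)).trans ih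
  -- choose the neighborhood V of x₀
  set δ := ε * c / 2 with hδ
  have hδpos : 0 < δ := by positivity
  set V : Set X := {x | ‖f x - f x₀‖ < δ} with hV
  have hVopen : IsOpen V := by
    have : Continuous fun x => ‖f x - f x₀‖ :=
      continuous_norm.comp (hfc.sub continuous_const)
    simpa [hV] using isOpen_lt this continuous_const
  have hx₀V : x₀ ∈ V := by simp [hV, hδpos]
  -- compactness: eventually U n ⊆ V
  have hCScompact : CompactSpace X := hCM.1
  obtain ⟨N, hN⟩ : ∃ N : ℕ, U (N + 1) ∩ Vᶜ = ∅ := by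
    have h1 : (Set.univ ∩ ⋂ i : ℕ, U (i + 1) ∩ Vᶜ) = ∅ := by
      rw [Set.univ_inter, Set.eq_empty_iff_forall_notMem]
      intro x hx
      rw [Set.mem_iInter] at hx
      have hxU : x ∈ (⋂ n ∈ {n : ℕ | 1 ≤ n}, ⋃ k ∈ Set.Icc 1 (C n), B n k) := by
        apply Set.mem_iInter₂.mpr
        intro n hn
        have hn' : 1 ≤ n := hn
        have h0 := (hx (n - 1)).1
        rw [show n - 1 + 1 = n from by omega] at h0
        exact h0
      rw [hx₀] at hxU
      have hx0 : x = x₀ := hxU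
      exact (hx 0).2 (hx0 ▸ hx₀V)
    have h2 : ∀ i : ℕ, IsClosed (U (i + 1) ∩ Vᶜ) := fun i =>
      ((hUclopen (i + 1) (Nat.succ_le_succ (Nat.zero_le i))).isClosed).inter hVopen.isClosed_compl
    have h3 : Directed (· ⊇ ·) fun i : ℕ => U (i + 1) ∩ Vᶜ := by
      intro i j
      refine ⟨max i j, ?_, ?_⟩
      · exact Set.inter_subset_inter_left _
          (hUanti (i + 1) (Nat.succ_le_succ (Nat.zero_le i)) (max i j + 1)
            (Nat.succ_le_succ (le_max_left i j)))
      · exact Set.inter_subset_inter_left _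
          (hUanti (j + 1) (Nat.succ_le_succ (Nat.zero_le j)) (max i j + 1)
            (Nat.succ_le_succ (le_max_right i j)))
    obtain ⟨i, hi⟩ := isCompact_univ.elim_directed_family_closed _ h2 h1 h3
    exact ⟨i, by rw [Set.univ_inter] at hi; exact hi⟩
  have hUV : U (N + 1) ⊆ V := by
    intro x hx
    by_contra hxV
    exact absurd (Set.eq_empty_iff_forall_notMem.mp hN x ⟨hx, hxV⟩) (fun hh => hh)
  -- main estimate
  rw [Filter.eventually_atTop]
  refine ⟨N + 1, fun n hn l hl1 hl2 => ?_⟩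
  have hn1 : 1 ≤ n := le_trans (Nat.succ_le_succ (Nat.zero_le N)) hn
  have hUnV : U n ⊆ V := (hUanti (N + 1) (Nat.succ_le_succ (Nat.zero_le N)) n hn).trans hUV
  obtain ⟨b, hb⟩ := hKR.B_nonempty n l hn1 hl1 hl2
  have hhpos : 1 ≤ h n l := hKR.h_pos n l hn1 hl1 hl2
  -- left inverse iterate
  have hinv : ∀ (m : ℕ) (x : X), (T : X → X)^[m] ((T.symm : X → X)^[m] x) = x := by
    intro m
    exact Function.LeftInverse.iterate (fun x => T.apply_symm_apply x) m
  set z : X := (T.symm : X → X)^[h n l - 1] b with hz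
  set y : X := (T.symm : X → X) z with hy
  have hTy : (T : X → X) y = z := T.apply_symm_apply z
  have hztop : (T : X → X)^[h n l - 1] z ∈ B n l := by
    rw [hz, hinv]; exact hb
  have hwb : (T : X → X)^[h n l] y = b := by
    have : h n l = (h n l - 1) + 1 := by omega
    rw [this, Function.iterate_succ_apply, hTy, hz, hinv]
  -- y is in a base
  have hyU : y ∈ U n := by
    have hycover : y ∈ (⋃ k ∈ Set.Icc 1 (C n), ⋃ j ∈ Set.Iio (h n k),
        (T : X → X)^[j] ⁻¹' B n k) := by
      rw [hKR.towers_cover n hn1]; trivial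
    obtain ⟨k', hk', j, hj, hyj⟩ := by
      simpa only [Set.mem_iUnion, Set.mem_Iio, exists_prop] using hycover
    rcases Nat.eq_zero_or_pos j with hj0 | hjpos
    · subst hj0
      exact Set.mem_biUnion hk' (by simpa using hyj)
    · exfalso
      obtain ⟨j', rfl⟩ : ∃ j', j = j' + 1 := ⟨j - 1, by omega⟩
      have hzj' : z ∈ (T : X → X)^[j'] ⁻¹' B n k' := by
        have heq : (T : X → X)^[j'] z = (T : X → X)^[j' + 1] y := by
          rw [Function.iterate_succ_apply, hTy]
        have : (T : X → X)^[j' + 1] y ∈ B n k' := hyj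
        rw [Set.mem_preimage, heq]
        exact this
      have hne : (k', j') ≠ (l, h n l - 1) := by
        intro hc
        have h1 : k' = l := (Prod.ext_iff.mp hc).1
        have h2 : j' = h n l - 1 := (Prod.ext_iff.mp hc).2
        subst h1
        omega
      have hdisj := hKR.towers_disjoint n hn1 k' j' l (h n l - 1)
        hk'.1 hk'.2 (by omega) hl1 hl2 (by omega) hne
      exact Set.disjoint_left.mp hdisj hzj' hztop
  have hbU : b ∈ U n := Set.mem_biUnion ⟨hl1, hl2⟩ hb
  have hyV : y ∈ V := hUnV hyU
  have hbV : b ∈ V := hUnV hbU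
  -- conclude
  have hfb : f b = lam ^ h n l * f y := by rw [← hwb, iter]
  have key : ‖lam ^ h n l - 1‖ * c = ‖f b - f y‖ := by
    rw [← habs y, ← norm_mul, sub_mul, hfb, one_mul]
  have hbound : ‖f b - f y‖ < ε * c := by
    have h1 : f b - f y = (f b - f x₀) + (f x₀ - f y) := by ring
    calc ‖f b - f y‖
        ≤ ‖f b - f x₀‖ + ‖f x₀ - f y‖ := by
          rw [h1]; exact norm_add_le _ _
      _ < δ + δ := by
          apply add_lt_add hbV
          rw [norm_sub_rev]
          exact hyV
      _ = ε * c := by rw [hδ]; ring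
  have : ‖lam ^ h n l - 1‖ * c < ε * c := by rw [key]; exact hbound
  exact lt_of_mul_lt_mul_right this (le_of_lt hcpos) |>.trans_le le_rfl

end
end

section
/- Let (X,T) be a Cantor minimal system equipped with a proper nested Kakutani–Rohlin structure. If λ = exp(2iπα) is a continuous eigenvalue of (X,T), then there exist m ≥ 1, a real vector v ∈ ℝ^{C(m)} and an integer vector w ∈ ℤ^{C(m)} such that α·h(m) = v + w and P(n,m)v → 0 as n → ∞ (continuous eigenvalues always come from the stable space of the sequence of incidence matrices). -/
open MeasureTheory Filter Topology Set Pointwise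

noncomputable section

variable {X : Type} [TopologicalSpace X]

namespace KRAux

/-- union of the bases of level-`n` towers -/
def kbase (C : ℕ → ℕ) (B : ℕ → ℕ → Set X) (n : ℕ) : Set X :=
  ⋃ k ∈ Set.Icc 1 (C n), B n k

variable {T : X ≃ₜ X} {C : ℕ → ℕ} {B : ℕ → ℕ → Set X} {h : ℕ → ℕ → ℕ}

lemma mem_kbase_iff {n : ℕ} {x : X} :
    x ∈ kbase C B n ↔ ∃ l, 1 ≤ l ∧ l ≤ C n ∧ x ∈ B n l := by
  simp [kbase, Set.mem_Icc, and_assoc]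

lemma mem_kbase_of {n l : ℕ} {x : X} (h1 : 1 ≤ l) (h2 : l ≤ C n) (hx : x ∈ B n l) :
    x ∈ kbase C B n := mem_kbase_iff.2 ⟨l, h1, h2, hx⟩

lemma iterTS (T : X ≃ₜ X) (n : ℕ) (y : X) :
    (T : X → X)^[n] ((T.symm : X → X)^[n] y) = y := by
  induction n generalizing y with
  | zero => rfl
  | succ n ih =>
    rw [Function.iterate_succ_apply (T.symm : X → X), Function.iterate_succ_apply' (T : X → X),
      ih, T.apply_symm_apply]

lemma iterST (T : X ≃ₜ X) (n : ℕ) (y : X) :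
    (T.symm : X → X)^[n] ((T : X → X)^[n] y) = y := by
  induction n generalizing y with
  | zero => rfl
  | succ n ih =>
    rw [Function.iterate_succ_apply (T : X → X), Function.iterate_succ_apply' (T.symm : X → X),
      ih, T.symm_apply_apply]

lemma iterS_sub (T : X ≃ₜ X) {s t : ℕ} (hst : s ≤ t) (a : X) :
    (T.symm : X → X)^[s] ((T : X → X)^[t] a) = (T : X → X)^[t - s] a := by
  have h1 : (T : X → X)^[t] a = (T : X → X)^[s] ((T : X → X)^[t - s] a) := by
    rw [← Function.iterate_add_apply]; congr 1; omega
  rw [h1, iterST]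

variable (hKR : KRStruct T C B h)
include hKR

lemma exists_piece (n : ℕ) (hn : 1 ≤ n) (x : X) :
    ∃ k j, 1 ≤ k ∧ k ≤ C n ∧ j < h n k ∧ (T : X → X)^[j] x ∈ B n k := by
  have hx : x ∈ (⋃ k ∈ Set.Icc 1 (C n), ⋃ j ∈ Set.Iio (h n k), (T : X → X)^[j] ⁻¹' B n k) := by
    rw [hKR.towers_cover n hn]; trivial
  simp only [Set.mem_iUnion, Set.mem_Icc, Set.mem_Iio, Set.mem_preimage] at hx
  obtain ⟨k, ⟨hk1, hk2⟩, j, hj, hmem⟩ := hx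
  exact ⟨k, j, hk1, hk2, hj, hmem⟩

lemma piece_unique (n : ℕ) (hn : 1 ≤ n) {x : X} {k j k' j' : ℕ}
    (hk1 : 1 ≤ k) (hk2 : k ≤ C n) (hj : j < h n k)
    (hk1' : 1 ≤ k') (hk2' : k' ≤ C n) (hj' : j' < h n k')
    (hm : (T : X → X)^[j] x ∈ B n k) (hm' : (T : X → X)^[j'] x ∈ B n k') :
    k = k' ∧ j = j' := by
  by_contra hne
  have hne' : (k, j) ≠ (k', j') := by
    simp only [Ne, Prod.mk.injEq]; tauto
  have hd := hKR.towers_disjoint n hn k j k' j' hk1 hk2 hj hk1' hk2' hj' hne'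
  exact (Set.disjoint_left.1 hd) (Set.mem_preimage.2 hm) (Set.mem_preimage.2 hm')

lemma base_unique (n : ℕ) (hn : 1 ≤ n) {x : X} {l l' : ℕ}
    (hl1 : 1 ≤ l) (hl2 : l ≤ C n) (hl1' : 1 ≤ l') (hl2' : l' ≤ C n)
    (hm : x ∈ B n l) (hm' : x ∈ B n l') : l = l' := by
  have := piece_unique hKR n hn hl1 hl2 (hKR.h_pos n l hn hl1 hl2)
    hl1' hl2' (hKR.h_pos n l' hn hl1' hl2') (x := x) (j := 0) (j' := 0) hm hm'
  exact this.1

lemma pred_mem_base (n : ℕ) (hn : 1 ≤ n) {k : ℕ} (hk1 : 1 ≤ k) (hk2 : k ≤ C n)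
    {y : X} (hy : y ∈ B n k) :
    (T.symm : X → X)^[h n k] y ∈ kbase C B n := by
  set u := (T.symm : X → X)^[h n k] y with hu
  obtain ⟨l, i, hl1, hl2, hi, hmem⟩ := exists_piece hKR n hn u
  rcases Nat.eq_zero_or_pos i with h0 | hpos
  · subst h0; exact mem_kbase_of hl1 hl2 hmem
  · exfalso
    have hhk := hKR.h_pos n k hn hk1 hk2
    have e1 : (T : X → X)^[i - 1] ((T : X → X) u) = (T : X → X)^[i] u := by
      rw [← Function.iterate_succ_apply]; congr 1; omega
    have e2 : (T : X → X)^[h n k - 1] ((T : X → X) u) = (T : X → X)^[h n k] u := by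
      rw [← Function.iterate_succ_apply]; congr 1; omega
    have hTu1 : (T : X → X)^[i - 1] ((T : X → X) u) ∈ B n l := by rw [e1]; exact hmem
    have hTu2 : (T : X → X)^[h n k - 1] ((T : X → X) u) ∈ B n k := by
      rw [e2, hu, iterTS]; exact hy
    have hpu := piece_unique hKR n hn hl1 hl2 (by omega : i - 1 < h n l)
      hk1 hk2 (by omega : h n k - 1 < h n k) hTu1 hTu2
    obtain ⟨rfl, h2⟩ := hpu
    omega

lemma mid_not_base (n : ℕ) (hn : 1 ≤ n) {l : ℕ} (hl1 : 1 ≤ l) (hl2 : l ≤ C n)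
    {b : X} (hb : b ∈ B n l) {s : ℕ} (hs1 : 1 ≤ s) (hs2 : s < h n l) :
    (T.symm : X → X)^[s] b ∉ kbase C B n := by
  intro hmem
  obtain ⟨l', hl1', hl2', hmem'⟩ := mem_kbase_iff.1 hmem
  have h1 : (T : X → X)^[s] ((T.symm : X → X)^[s] b) ∈ B n l := by
    rw [iterTS]; exact hb
  have := piece_unique hKR n hn hl1' hl2' (hKR.h_pos n l' hn hl1' hl2')
    hl1 hl2 hs2 (x := (T.symm : X → X)^[s] b) (j := 0) hmem' h1
  omega

lemma gap_eq (n : ℕ) (hn : 1 ≤ n) {a : X} {t l : ℕ}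
    (hl1 : 1 ≤ l) (hl2 : l ≤ C n) (ht : 1 ≤ t)
    (hb : (T : X → X)^[t] a ∈ B n l)
    (hmid : ∀ s, 1 ≤ s → s < t → (T : X → X)^[s] a ∉ kbase C B n)
    (ha : a ∈ kbase C B n) : t = h n l := by
  rcases lt_trichotomy t (h n l) with hlt | heq | hgt
  · exfalso
    have : a ∈ kbase C B n → False := by
      have h1 : a = (T.symm : X → X)^[t] ((T : X → X)^[t] a) := (iterST T t a).symm
      intro hmem
      exact mid_not_base hKR n hn hl1 hl2 hb ht hlt (h1 ▸ hmem)
    exact this ha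
  · exact heq
  · exfalso
    have h1 : (T : X → X)^[t - h n l] a ∈ kbase C B n := by
      have := pred_mem_base hKR n hn hl1 hl2 hb
      rwa [iterS_sub T (by omega : h n l ≤ t)] at this
    have hhl := hKR.h_pos n l hn hl1 hl2
    exact hmid (t - h n l) (by omega) (by omega) h1

lemma level_mem_iff (ν : ℕ) (hν : 1 ≤ ν) {k : ℕ} (hk1 : 1 ≤ k) (hk2 : k ≤ C (ν + 1))
    {j : ℕ} (hj : j < h (ν + 1) k) {l : ℕ} (hl1 : 1 ≤ l) (hl2 : l ≤ C ν)
    {y : X} (hy : y ∈ B (ν + 1) k) :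
    (T.symm : X → X)^[j] y ∈ B ν l ↔ (T : X → X)^[j] ⁻¹' B (ν + 1) k ⊆ B ν l := by
  have hz : (T.symm : X → X)^[j] y ∈ (T : X → X)^[j] ⁻¹' B (ν + 1) k := by
    simp only [Set.mem_preimage]; rw [iterTS]; exact hy
  constructor
  · intro hmem
    obtain ⟨l', i, hl1', hl2', hi, hsub⟩ := hKR.nested ν hν k hk1 hk2 j hj
    have h2 : (T : X → X)^[i] ((T.symm : X → X)^[j] y) ∈ B ν l' := hsub hz
    have := piece_unique hKR ν hν hl1 hl2 (hKR.h_pos ν l hν hl1 hl2)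
      hl1' hl2' hi (x := (T.symm : X → X)^[j] y) (j := 0) hmem h2
    obtain ⟨rfl, hi0⟩ := this
    rw [← hi0] at hsub
    simpa using hsub
  · intro hsub; exact hsub hz

omit hKR in
lemma KRmat_eq_card (T : X ≃ₜ X) (B : ℕ → ℕ → Set X) (h : ℕ → ℕ → ℕ)
    (n k l : ℕ) [DecidablePred fun j => (T : X → X)^[j] ⁻¹' (B n k) ⊆ B (n - 1) l] :
    KRmat T B h n k l =
      ((Finset.range (h n k)).filter
        (fun j => (T : X → X)^[j] ⁻¹' (B n k) ⊆ B (n - 1) l)).card := by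
  have h1 : {j : ℕ | j < h n k ∧ (T : X → X)^[j] ⁻¹' (B n k) ⊆ B (n - 1) l}
      = (((Finset.range (h n k)).filter
        (fun j => (T : X → X)^[j] ⁻¹' (B n k) ⊆ B (n - 1) l) : Finset ℕ) : Set ℕ) := by
    ext j
    simp only [Set.mem_setOf_eq, Finset.coe_filter, Finset.mem_range]
  calc Nat.card {j : ℕ // j < h n k ∧ (T : X → X)^[j] ⁻¹' (B n k) ⊆ B (n - 1) l}
      = ({j : ℕ | j < h n k ∧ (T : X → X)^[j] ⁻¹' (B n k) ⊆ B (n - 1) l} : Set ℕ).ncard :=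
        Nat.card_coe_set_eq _
    _ = _ := by rw [h1, Set.ncard_coe_finset]

end KRAux

lemma arg_small {z : ℂ} (hz : ‖z‖ = 1) {θ : ℝ} (hθ0 : 0 < θ) (hθπ : θ ≤ Real.pi)
    (hzc : ‖z - 1‖ < 1 - Real.cos θ) : |z.arg| < θ := by
  have hz0 : z ≠ 0 := by
    intro h0; rw [h0] at hz; simp at hz
  have hre : Real.cos z.arg = z.re := by
    rw [Complex.cos_arg hz0, hz, div_one]
  have hre2 : |z.re - 1| ≤ ‖z - 1‖ := by
    have := Complex.abs_re_le_norm (z - 1)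
    simpa using this
  have h1 : Real.cos θ < z.re := by
    have := abs_le.1 hre2
    linarith [this.1]
  by_contra hge
  push_neg at hge
  have h2 : Real.cos |z.arg| ≤ Real.cos θ := by
    rcases eq_or_lt_of_le hge with heq | hlt
    · rw [← heq]
    · exact le_of_lt (Real.strictAntiOn_cos ⟨le_of_lt hθ0, hθπ⟩
        ⟨by positivity, Complex.abs_arg_le_pi z⟩ hlt)
  rw [Real.cos_abs, hre] at h2
  linarith

lemma real_int_of_exp {r : ℝ} (hr : Complex.exp (2 * Real.pi * Complex.I * r) = 1) :
    ∃ N : ℤ, r = N := by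
  rw [Complex.exp_eq_one_iff] at hr
  obtain ⟨N, hN⟩ := hr
  refine ⟨N, ?_⟩
  have h2 : (2 * (Real.pi : ℂ) * Complex.I) ≠ 0 := by
    simp [Real.pi_ne_zero, Complex.I_ne_zero]
  have : (r : ℂ) = (N : ℂ) := by
    apply mul_left_cancel₀ h2
    rw [hN]; ring
  exact_mod_cast this


/-- Theorem 3.5: continuous eigenvalues come from the stable space: if `exp(2iπα)` is a
continuous eigenvalue of `(X,T)`, then there are `m ≥ 1`, a real vector `v` and an
integer vector `w` with `α h(m) = v + w` and `P(n,m)v → 0` as `n → ∞`. -/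
theorem continuous_eigenvalue_from_stable_space
    {X : Type} [TopologicalSpace X] (T : X ≃ₜ X) (hCM : CantorMinimal T)
    (C : ℕ → ℕ) (B : ℕ → ℕ → Set X) (h : ℕ → ℕ → ℕ) (hKR : KRStruct T C B h)
    (α : ℝ) (heig : ContEigenvalue T (Complex.exp (2 * Real.pi * Complex.I * α))) :
    ∃ m, 1 ≤ m ∧ ∃ (v : ℕ → ℝ) (w : ℕ → ℤ),
      (∀ k, 1 ≤ k → k ≤ C m → α * (h m k : ℝ) = v k + (w k : ℝ)) ∧
      PtendsZero T C B h m v := by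
  classical
  obtain ⟨f, hfc, hf0, hfT⟩ := heig
  haveI : CompactSpace X := hCM.1
  obtain ⟨x₀, hx₀⟩ := hKR.inter_singleton
  set lam : ℂ := Complex.exp (2 * Real.pi * Complex.I * α) with hlam
  have hπ : (0:ℝ) < Real.pi := Real.pi_pos
  have hlam0 : lam ≠ 0 := by rw [hlam]; exact Complex.exp_ne_zero _
  have habs_lam : ‖lam‖ = 1 := by
    rw [hlam]
    have e : (2 * (Real.pi:ℂ) * Complex.I * (α:ℂ)) = ((2 * Real.pi * α : ℝ) : ℂ) * Complex.I := by
      push_cast; ring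
    rw [e, Complex.norm_exp_ofReal_mul_I]
  have hiter : ∀ (j : ℕ) (x : X), f ((T : X → X)^[j] x) = lam ^ j * f x := by
    intro j
    induction j with
    | zero => intro x; simp
    | succ j ih =>
      intro x
      rw [Function.iterate_succ_apply', hfT, ih]
      ring
  have habsT : ∀ x, ‖f (T x)‖ = ‖f x‖ := by
    intro x; rw [hfT, norm_mul, habs_lam, one_mul]
  have habsS : ∀ x, ‖f ((T.symm : X → X) x)‖ = ‖f x‖ := by
    intro x
    have h1 := habsT ((T.symm : X → X) x)
    rw [T.apply_symm_apply] at h1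
    exact h1.symm
  have hit1 : ∀ (n : ℕ) (x : X), ‖f ((T : X → X)^[n] x)‖ = ‖f x‖ := by
    intro n
    induction n with
    | zero => intro x; rfl
    | succ n ih => intro x; rw [Function.iterate_succ_apply', habsT, ih]
  have hit2 : ∀ (n : ℕ) (x : X), ‖f ((T.symm : X → X)^[n] x)‖ = ‖f x‖ := by
    intro n
    induction n with
    | zero => intro x; rfl
    | succ n ih => intro x; rw [Function.iterate_succ_apply', habsS, ih]
  have habs_const : ∀ x y : X, ‖f y‖ = ‖f x‖ := by
    intro x y
    have hd := hCM.2.2.2.2.2 x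
    have hcl : IsClosed {z : X | ‖f z‖ = ‖f x‖} :=
      isClosed_eq (continuous_norm.comp hfc) continuous_const
    have hsub : HOrbit T x ⊆ {z : X | ‖f z‖ = ‖f x‖} := by
      rintro z ⟨n, hn | hn⟩ <;> subst hn
      · exact hit1 n x
      · exact hit2 n x
    exact closure_minimal hsub hcl (hd y)
  have hfx0 : f x₀ ≠ 0 := by
    intro h0
    apply hf0
    funext x
    show f x = 0
    have h1 := habs_const x₀ x
    rw [h0] at h1
    simp only [norm_zero] at h1
    exact norm_eq_zero.1 h1
  have habs0 : ‖f x₀‖ ≠ 0 := by simpa [map_eq_zero] using hfx0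
  set F : X → ℂ := fun x => f x / f x₀ with hF
  have habsF : ∀ x, ‖F x‖ = 1 := by
    intro x
    simp only [hF, norm_div]
    rw [habs_const x₀ x]
    exact div_self habs0
  have hF0 : ∀ x, F x ≠ 0 := by
    intro x h0
    have := habsF x
    rw [h0] at this
    simp at this
  have hFexp : ∀ x, F x = Complex.exp (((F x).arg : ℂ) * Complex.I) := by
    intro x
    have h1 := Complex.norm_mul_exp_arg_mul_I (F x)
    rw [habsF x] at h1
    simpa using h1.symm
  set ψ : X → ℝ := fun x => (F x).arg / (2 * Real.pi) with hψ
  have hψexp : ∀ x : X, Complex.exp (2 * Real.pi * Complex.I * ((ψ x : ℝ) : ℂ)) = F x := by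
    intro x
    have e : (2 * (Real.pi:ℂ) * Complex.I * ((ψ x : ℝ) : ℂ)) = ((F x).arg : ℂ) * Complex.I := by
      have hπc : (Real.pi : ℂ) ≠ 0 := by exact_mod_cast Real.pi_ne_zero
      simp only [hψ]
      push_cast
      field_simp
    rw [e, ← hFexp]
  have hint : ∀ (H : ℕ) (b u : X), f b = lam ^ H * f u →
      ∃ N : ℤ, α * H - (ψ b - ψ u) = N := by
    intro H b u hbu
    apply real_int_of_exp
    have e1 : (2 * (Real.pi:ℂ) * Complex.I * ((α * H - (ψ b - ψ u) : ℝ) : ℂ))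
        = ((H:ℕ):ℂ) * (2 * Real.pi * Complex.I * α)
          - 2 * Real.pi * Complex.I * ((ψ b : ℝ) : ℂ)
          + 2 * Real.pi * Complex.I * ((ψ u : ℝ) : ℂ) := by
      push_cast; ring
    rw [e1, Complex.exp_add, Complex.exp_sub, Complex.exp_nat_mul, hψexp, hψexp, ← hlam]
    have hFb : F b = lam ^ H * F u := by
      simp only [hF]
      rw [hbu, mul_div_assoc]
    rw [hFb]
    have hFu0 := hF0 u
    field_simp
  have hx0mem : ∀ n, 1 ≤ n → x₀ ∈ KRAux.kbase C B n := by
    intro n hn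
    have h1 : x₀ ∈ ⋂ n ∈ {n : ℕ | 1 ≤ n}, ⋃ k ∈ Set.Icc 1 (C n), B n k := by
      rw [hx₀]; exact Set.mem_singleton x₀
    exact Set.mem_iInter₂.1 h1 n hn
  have hbase_closed : ∀ n, 1 ≤ n → IsClosed (KRAux.kbase C B n) := by
    intro n hn
    exact Set.Finite.isClosed_biUnion (Set.finite_Icc _ _)
      (fun k hk => (hKR.B_clopen n k hn hk.1 hk.2).isClosed)
  have hmono : ∀ a b : ℕ, 1 ≤ a → a ≤ b → KRAux.kbase C B b ⊆ KRAux.kbase C B a := by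
    intro a b ha hab
    induction b, hab using Nat.le_induction with
    | base => exact subset_rfl
    | succ n hn ih =>
      exact Set.Subset.trans (hKR.bases_nested n (le_trans ha hn)) ih
  have hshrink : ∀ U : Set X, IsOpen U → x₀ ∈ U →
      ∃ N, 1 ≤ N ∧ ∀ n, N ≤ n → KRAux.kbase C B n ⊆ U := by
    intro U hU hxU
    by_cases hex : ∃ j : ℕ, KRAux.kbase C B (j+1) \ U = ∅
    · obtain ⟨j, hj⟩ := hex
      refine ⟨j+1, by omega, fun n hn x hx => ?_⟩
      have h1 : x ∈ KRAux.kbase C B (j+1) := hmono (j+1) n (by omega) hn hx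
      by_contra hxu
      exact absurd (Set.mem_diff x |>.2 ⟨h1, hxu⟩) (by rw [hj]; exact Set.notMem_empty x)
    · push_neg at hex
      exfalso
      set K : ℕ → Set X := fun j => KRAux.kbase C B (j+1) \ U with hK
      have h1 : ∀ j, K (j+1) ⊆ K j := fun j =>
        Set.diff_subset_diff_left (hmono (j+1) (j+2) (by omega) (by omega))
      have h2 : ∀ j, (K j).Nonempty := fun j => hex j
      have h3 : ∀ j, IsClosed (K j) := fun j => (hbase_closed (j+1) (by omega)).sdiff hU
      have h4 : IsCompact (K 0) := (h3 0).isCompact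
      obtain ⟨x, hx⟩ :=
        IsCompact.nonempty_iInter_of_sequence_nonempty_isCompact_isClosed K h1 h2 h4 h3
      have hxbase : x ∈ ⋂ n ∈ {n : ℕ | 1 ≤ n}, ⋃ k ∈ Set.Icc 1 (C n), B n k := by
        apply Set.mem_iInter₂.2
        intro n hn
        have hn' : (1:ℕ) ≤ n := hn
        have hxn : x ∈ K (n-1) := Set.mem_iInter.1 hx (n-1)
        have e : n - 1 + 1 = n := by omega
        have := hxn.1
        rw [e] at this
        exact this
      rw [hx₀] at hxbase
      have hxx : x = x₀ := hxbase
      have hxU' : x ∉ U := (Set.mem_iInter.1 hx 0).2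
      exact hxU' (hxx ▸ hxU)
  have hcos1 : ∀ θ : ℝ, 0 < θ → θ ≤ Real.pi → Real.cos θ < 1 := by
    intro θ h1 h2
    have h3 := Real.strictAntiOn_cos (Set.mem_Icc.2 ⟨le_refl 0, hπ.le⟩)
      (Set.mem_Icc.2 ⟨h1.le, h2⟩) h1
    simpa using h3
  have hFcont : Continuous F := hfc.div_const _
  have hFx0 : F x₀ = 1 := div_self hfx0
  have hargN : ∀ θ : ℝ, 0 < θ → θ ≤ Real.pi → ∃ N, 1 ≤ N ∧ ∀ n, N ≤ n →
      ∀ y ∈ KRAux.kbase C B n, |(F y).arg| < θ := by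
    intro θ h1 h2
    have hUopen : IsOpen {x : X | ‖F x - 1‖ < 1 - Real.cos θ} :=
      isOpen_lt (continuous_norm.comp (hFcont.sub continuous_const)) continuous_const
    have hx0U : x₀ ∈ {x : X | ‖F x - 1‖ < 1 - Real.cos θ} := by
      simp only [Set.mem_setOf_eq, hFx0, sub_self, norm_zero]
      linarith [hcos1 θ h1 h2]
    obtain ⟨N, hN1, hN2⟩ := hshrink _ hUopen hx0U
    exact ⟨N, hN1, fun n hn y hy => arg_small (habsF y) h1 h2 (hN2 n hn hy)⟩
  have hψbound : ∀ (θ : ℝ) (y : X), |(F y).arg| < θ → |ψ y| < θ / (2 * Real.pi) := by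
    intro θ y hy
    simp only [hψ]
    rw [abs_div, abs_of_pos (by positivity : (0:ℝ) < 2 * Real.pi)]
    exact (div_lt_div_iff_of_pos_right (by positivity)).2 hy
  obtain ⟨m, hm1, hm⟩ := hargN (Real.pi / 8) (by positivity) (by linarith)
  have hψ16 : ∀ n, m ≤ n → ∀ y, y ∈ KRAux.kbase C B n → |ψ y| < 1/16 := by
    intro n hn y hy
    have h1 := hψbound _ y (hm n hn y hy)
    have e : (Real.pi/8)/(2*Real.pi) = 1/16 := by
      field_simp
      ring
    linarith
  set vfun : ℕ → ℕ → ℝ := fun n l =>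
    if hB : (B n l).Nonempty then ψ hB.some - ψ ((T.symm : X → X)^[h n l] hB.some) else 0
    with hvfun
  have hvfun_eq : ∀ n l (hB : (B n l).Nonempty),
      vfun n l = ψ hB.some - ψ ((T.symm : X → X)^[h n l] hB.some) := by
    intro n l hB
    simp only [hvfun]
    rw [dif_pos hB]
  have hvint : ∀ n l, 1 ≤ n → 1 ≤ l → l ≤ C n →
      ∃ N : ℤ, α * (h n l : ℝ) - vfun n l = N := by
    intro n l hn hl1 hl2
    have hB := hKR.B_nonempty n l hn hl1 hl2
    have hfb : f hB.some = lam ^ (h n l) * f ((T.symm : X → X)^[h n l] hB.some) := by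
      conv_lhs => rw [← KRAux.iterTS T (h n l) hB.some]
      rw [hiter]
    obtain ⟨N, hN⟩ := hint (h n l) _ _ hfb
    refine ⟨N, ?_⟩
    rw [hvfun_eq n l hB]
    exact hN
  have hv_eq : ∀ n l, m ≤ n → 1 ≤ l → l ≤ C n → ∀ b, b ∈ B n l →
      vfun n l = ψ b - ψ ((T.symm : X → X)^[h n l] b) := by
    intro n l hn hl1 hl2 b hb
    have hn1 : 1 ≤ n := le_trans hm1 hn
    have hB := hKR.B_nonempty n l hn1 hl1 hl2
    have hb0mem : hB.some ∈ B n l := hB.some_mem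
    have hfb : f b = lam ^ (h n l) * f ((T.symm : X → X)^[h n l] b) := by
      conv_lhs => rw [← KRAux.iterTS T (h n l) b]
      rw [hiter]
    obtain ⟨N, hN⟩ := hint (h n l) _ _ hfb
    obtain ⟨N₀, hN₀⟩ := hvint n l hn1 hl1 hl2
    have hveq0 := hvfun_eq n l hB
    -- bounds
    have hbb : b ∈ KRAux.kbase C B n := KRAux.mem_kbase_of hl1 hl2 hb
    have hub : (T.symm : X → X)^[h n l] b ∈ KRAux.kbase C B n :=
      KRAux.pred_mem_base hKR n hn1 hl1 hl2 hb
    have hb0b : hB.some ∈ KRAux.kbase C B n := KRAux.mem_kbase_of hl1 hl2 hb0mem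
    have hu0b : (T.symm : X → X)^[h n l] hB.some ∈ KRAux.kbase C B n :=
      KRAux.pred_mem_base hKR n hn1 hl1 hl2 hb0mem
    have e1 := abs_lt.1 (hψ16 n hn b hbb)
    have e2 := abs_lt.1 (hψ16 n hn _ hub)
    have e3 := abs_lt.1 (hψ16 n hn _ hb0b)
    have e4 := abs_lt.1 (hψ16 n hn _ hu0b)
    have hNN : ((N - N₀ : ℤ) : ℝ)
        = (ψ hB.some - ψ ((T.symm : X → X)^[h n l] hB.some)) - (ψ b - ψ ((T.symm : X → X)^[h n l] b)) := by
      push_cast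
      rw [hveq0] at hN₀
      linarith
    have habsNN : |((N - N₀ : ℤ) : ℝ)| < 1 := by
      rw [hNN, abs_lt]
      constructor <;> linarith
    have hN0 : N - N₀ = 0 := by
      have : |(N - N₀ : ℤ)| < 1 := by exact_mod_cast habsNN
      exact Int.abs_lt_one_iff.1 this
    have hNeq : N = N₀ := by omega
    rw [hveq0] at hN₀
    rw [hveq0]
    rw [hNeq] at hN
    linarith
  have hvb : ∀ (θ : ℝ), 0 < θ → ∀ n l, 1 ≤ n → 1 ≤ l → l ≤ C n →
      (∀ y, y ∈ KRAux.kbase C B n → |(F y).arg| < θ) → |vfun n l| < θ / Real.pi := by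
    intro θ hθ n l hn hl1 hl2 hbnd
    have hB := hKR.B_nonempty n l hn hl1 hl2
    have hb0b : hB.some ∈ KRAux.kbase C B n := KRAux.mem_kbase_of hl1 hl2 hB.some_mem
    have hu0b : (T.symm : X → X)^[h n l] hB.some ∈ KRAux.kbase C B n :=
      KRAux.pred_mem_base hKR n hn hl1 hl2 hB.some_mem
    have e1 := abs_lt.1 (hψbound θ _ (hbnd _ hb0b))
    have e2 := abs_lt.1 (hψbound θ _ (hbnd _ hu0b))
    rw [hvfun_eq n l hB]
    have e : θ/(2*Real.pi) + θ/(2*Real.pi) = θ/Real.pi := by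
      field_simp
      ring
    rw [abs_lt]
    constructor <;> linarith
  set cnt : ℕ → ℕ → X → ℕ → ℕ := fun ν l a t =>
    ((Finset.Icc 1 t).filter (fun j => (T : X → X)^[j] a ∈ B ν l)).card with hcnt
  have htel : ∀ ν, m ≤ ν → ∀ t : ℕ, ∀ a : X, a ∈ KRAux.kbase C B ν →
      (T : X → X)^[t] a ∈ KRAux.kbase C B ν →
      α * t - ψ ((T : X → X)^[t] a) + ψ a
        = ∑ l ∈ Finset.Icc 1 (C ν), (cnt ν l a t : ℝ) * (α * (h ν l : ℝ) - vfun ν l) := by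
    intro ν hν t
    induction t using Nat.strong_induction_on with
    | _ t IH =>
    intro a ha hta
    have hν1 : 1 ≤ ν := le_trans hm1 hν
    rcases Nat.eq_zero_or_pos t with rfl | ht
    · have h0 : (Finset.Icc 1 0 : Finset ℕ) = ∅ := Finset.Icc_eq_empty (by omega)
      simp only [hcnt, h0, Finset.filter_empty, Finset.card_empty, Nat.cast_zero, zero_mul,
        Finset.sum_const_zero, Function.iterate_zero_apply]
      ring
    · have hPex : ∃ j, 1 ≤ j ∧ j ≤ t ∧ (T : X → X)^[j] a ∈ KRAux.kbase C B ν :=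
        ⟨t, ht, le_refl t, hta⟩
      set j₀ := Nat.find hPex with hj₀
      obtain ⟨hj₀1, hj₀t, hj₀mem⟩ := Nat.find_spec hPex
      have hmid : ∀ s, 1 ≤ s → s < j₀ → (T : X → X)^[s] a ∉ KRAux.kbase C B ν := by
        intro s h1 h2 hmem
        exact Nat.find_min hPex h2 ⟨h1, by omega, hmem⟩
      obtain ⟨l₀, hl₀1, hl₀2, hbl₀⟩ := KRAux.mem_kbase_iff.1 hj₀mem
      have hgap : j₀ = h ν l₀ := KRAux.gap_eq hKR ν hν1 hl₀1 hl₀2 hj₀1 hbl₀ hmid ha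
      have hSb : (T.symm : X → X)^[h ν l₀] ((T : X → X)^[j₀] a) = a := by
        rw [← hgap, KRAux.iterST]
      have hveq : vfun ν l₀ = ψ ((T : X → X)^[j₀] a) - ψ a := by
        rw [hv_eq ν l₀ hν hl₀1 hl₀2 _ hbl₀, hSb]
      have hlt : t - j₀ < t := by omega
      have hT : (T : X → X)^[t - j₀] ((T : X → X)^[j₀] a) = (T : X → X)^[t] a := by
        rw [← Function.iterate_add_apply]
        congr 1
        omega
      have hIH := IH (t - j₀) hlt ((T : X → X)^[j₀] a) hj₀mem (by rw [hT]; exact hta)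
      have hcount : ∀ l, 1 ≤ l → l ≤ C ν →
          cnt ν l a t = cnt ν l ((T : X → X)^[j₀] a) (t - j₀) + (if l = l₀ then 1 else 0) := by
        intro l hl1 hl2
        simp only [hcnt]
        have hsplit : Finset.Icc 1 t = Finset.Icc 1 j₀ ∪ Finset.Ioc j₀ t := by
          ext j
          simp only [Finset.mem_union, Finset.mem_Icc, Finset.mem_Ioc]
          omega
        have hdisj : Disjoint (Finset.Icc 1 j₀) (Finset.Ioc j₀ t) := by
          rw [Finset.disjoint_left]
          intro j hj hj'
          rw [Finset.mem_Icc] at hj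
          rw [Finset.mem_Ioc] at hj'
          omega
        rw [hsplit, Finset.filter_union,
          Finset.card_union_of_disjoint (Finset.disjoint_filter_filter hdisj)]
        have hA : (Finset.Icc 1 j₀).filter (fun j => (T : X → X)^[j] a ∈ B ν l)
            = if l = l₀ then {j₀} else ∅ := by
          ext j
          simp only [Finset.mem_filter, Finset.mem_Icc]
          constructor
          · rintro ⟨⟨hja, hjb⟩, hjm⟩
            have hj : j = j₀ := by
              by_contra hne
              exact hmid j hja (by omega) (KRAux.mem_kbase_of hl1 hl2 hjm)
            subst hj
            have hll : l = l₀ := KRAux.base_unique hKR ν hν1 hl1 hl2 hl₀1 hl₀2 hjm hbl₀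
            simp [hll]
          · intro hj
            rcases eq_or_ne l l₀ with rfl | hne
            · have hj' : j = j₀ := by simpa using hj
              subst hj'
              exact ⟨⟨hj₀1, le_refl _⟩, hbl₀⟩
            · simp [hne] at hj
        have hBc : ((Finset.Ioc j₀ t).filter (fun j => (T : X → X)^[j] a ∈ B ν l)).card
            = ((Finset.Icc 1 (t - j₀)).filter
                (fun j => (T : X → X)^[j] ((T : X → X)^[j₀] a) ∈ B ν l)).card := by
          apply Finset.card_bij' (fun j _ => j - j₀) (fun j _ => j + j₀)
          · intro j hj
            simp only [Finset.mem_filter, Finset.mem_Ioc] at hj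
            simp only [Finset.mem_filter, Finset.mem_Icc]
            refine ⟨⟨by omega, by omega⟩, ?_⟩
            have e : (T : X → X)^[j - j₀] ((T : X → X)^[j₀] a) = (T : X → X)^[j] a := by
              rw [← Function.iterate_add_apply]
              congr 1
              omega
            rw [e]
            exact hj.2
          · intro j hj
            simp only [Finset.mem_filter, Finset.mem_Icc] at hj
            simp only [Finset.mem_filter, Finset.mem_Ioc]
            refine ⟨⟨by omega, by omega⟩, ?_⟩
            have e : (T : X → X)^[j + j₀] a = (T : X → X)^[j] ((T : X → X)^[j₀] a) := by
              rw [← Function.iterate_add_apply]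
            rw [e]
            exact hj.2
          · intro j hj
            simp only [Finset.mem_filter, Finset.mem_Ioc] at hj
            omega
          · intro j hj
            simp only [Finset.mem_filter, Finset.mem_Icc] at hj
            omega
        rw [hA, hBc]
        rcases eq_or_ne l l₀ with rfl | hne
        · simp [add_comm]
        · simp [hne]
      have hsum : ∑ l ∈ Finset.Icc 1 (C ν), (cnt ν l a t : ℝ) * (α * (h ν l : ℝ) - vfun ν l)
          = (∑ l ∈ Finset.Icc 1 (C ν),
              (cnt ν l ((T : X → X)^[j₀] a) (t - j₀) : ℝ) * (α * (h ν l : ℝ) - vfun ν l))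
            + (α * (h ν l₀ : ℝ) - vfun ν l₀) := by
        have h1 : ∀ l ∈ Finset.Icc 1 (C ν),
            (cnt ν l a t : ℝ) * (α * (h ν l : ℝ) - vfun ν l)
            = (cnt ν l ((T : X → X)^[j₀] a) (t - j₀) : ℝ) * (α * (h ν l : ℝ) - vfun ν l)
              + (if l = l₀ then (α * (h ν l : ℝ) - vfun ν l) else 0) := by
          intro l hl
          rw [Finset.mem_Icc] at hl
          rw [hcount l hl.1 hl.2]
          push_cast
          split_ifs <;> ring
        rw [Finset.sum_congr rfl h1, Finset.sum_add_distrib, Finset.sum_ite_eq' _ l₀ _,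
          if_pos (Finset.mem_Icc.2 ⟨hl₀1, hl₀2⟩)]
      rw [hsum, ← hIH, hT, hveq, ← hgap]
      have hcast : (t : ℝ) = ((t - j₀ : ℕ) : ℝ) + (j₀ : ℝ) := by
        have : ((t - j₀ : ℕ) : ℝ) = (t : ℝ) - (j₀ : ℝ) := by
          exact Nat.cast_sub hj₀t
        rw [this]
        ring
      rw [hcast]
      ring
  have hcntKR : ∀ ν, 1 ≤ ν → ∀ k, 1 ≤ k → k ≤ C (ν+1) → ∀ y, y ∈ B (ν+1) k →
      ∀ l, 1 ≤ l → l ≤ C ν →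
      cnt ν l ((T.symm : X → X)^[h (ν+1) k] y) (h (ν+1) k) = KRmat T B h (ν+1) k l := by
    intro ν hν k hk1 hk2 y hy l hl1 hl2
    have hH1 : 1 ≤ h (ν+1) k := hKR.h_pos (ν+1) k (by omega) hk1 hk2
    rw [KRAux.KRmat_eq_card T B h (ν+1) k l]
    simp only [hcnt, Nat.add_sub_cancel]
    have hkey : ∀ j, 1 ≤ j → j ≤ h (ν+1) k →
        ((T : X → X)^[j] ((T.symm : X → X)^[h (ν+1) k] y) ∈ B ν l
          ↔ (T : X → X)^[h (ν+1) k - j] ⁻¹' B (ν+1) k ⊆ B ν l) := by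
      intro j hj1 hj2
      have e : (T : X → X)^[j] ((T.symm : X → X)^[h (ν+1) k] y)
          = (T.symm : X → X)^[h (ν+1) k - j] y := by
        have e2 : (T.symm : X → X)^[h (ν+1) k - j] ((T : X → X)^[h (ν+1) k]
            ((T.symm : X → X)^[h (ν+1) k] y))
            = (T : X → X)^[h (ν+1) k - (h (ν+1) k - j)] ((T.symm : X → X)^[h (ν+1) k] y) :=
          KRAux.iterS_sub T (by omega) _
        rw [KRAux.iterTS] at e2
        have e3 : h (ν+1) k - (h (ν+1) k - j) = j := by omega
        rw [e3] at e2
        exact e2.symm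
      rw [e]
      exact KRAux.level_mem_iff hKR ν hν hk1 hk2 (by omega : h (ν+1) k - j < h (ν+1) k)
        hl1 hl2 hy
    apply Finset.card_bij' (fun j _ => h (ν+1) k - j) (fun j _ => h (ν+1) k - j)
    · intro j hj
      simp only [Finset.mem_filter, Finset.mem_Icc] at hj
      simp only [Finset.mem_filter, Finset.mem_range]
      refine ⟨by omega, ?_⟩
      exact (hkey j hj.1.1 hj.1.2).1 hj.2
    · intro j hj
      simp only [Finset.mem_filter, Finset.mem_range] at hj
      simp only [Finset.mem_filter, Finset.mem_Icc]
      refine ⟨⟨by omega, by omega⟩, ?_⟩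
      have e4 : h (ν+1) k - (h (ν+1) k - j) = j := by omega
      rw [hkey (h (ν+1) k - j) (by omega) (by omega), e4]
      exact hj.2
    · intro j hj
      simp only [Finset.mem_filter, Finset.mem_Icc] at hj
      omega
    · intro j hj
      simp only [Finset.mem_filter, Finset.mem_range] at hj
      omega
  have hrec : ∀ ν, m ≤ ν → ∀ k, 1 ≤ k → k ≤ C (ν+1) →
      vfun (ν+1) k = ∑ l ∈ Finset.Icc 1 (C ν), (KRmat T B h (ν+1) k l : ℝ) * vfun ν l := by
    intro ν hν k hk1 hk2
    have hν1 : 1 ≤ ν := le_trans hm1 hν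
    obtain ⟨y, hy⟩ := hKR.B_nonempty (ν+1) k (by omega) hk1 hk2
    have hTu : (T : X → X)^[h (ν+1) k] ((T.symm : X → X)^[h (ν+1) k] y) = y :=
      KRAux.iterTS T _ y
    have hvk : vfun (ν+1) k = ψ y - ψ ((T.symm : X → X)^[h (ν+1) k] y) :=
      hv_eq (ν+1) k (by omega) hk1 hk2 y hy
    have hy1 : y ∈ KRAux.kbase C B (ν+1) := KRAux.mem_kbase_of hk1 hk2 hy
    have hu1 : (T.symm : X → X)^[h (ν+1) k] y ∈ KRAux.kbase C B (ν+1) :=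
      KRAux.pred_mem_base hKR (ν+1) (by omega) hk1 hk2 hy
    have hyν : y ∈ KRAux.kbase C B ν := hKR.bases_nested ν hν1 hy1
    have huν : (T.symm : X → X)^[h (ν+1) k] y ∈ KRAux.kbase C B ν :=
      hKR.bases_nested ν hν1 hu1
    have htel' := htel ν hν (h (ν+1) k) _ huν (by rw [hTu]; exact hyν)
    rw [hTu] at htel'
    have hcnts : ∀ l ∈ Finset.Icc 1 (C ν),
        (cnt ν l ((T.symm : X → X)^[h (ν+1) k] y) (h (ν+1) k) : ℝ)
          * (α * (h ν l : ℝ) - vfun ν l)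
        = (KRmat T B h (ν+1) k l : ℝ) * (α * (h ν l : ℝ) - vfun ν l) := by
      intro l hl
      rw [Finset.mem_Icc] at hl
      rw [hcntKR ν hν1 k hk1 hk2 y hy l hl.1 hl.2]
    rw [Finset.sum_congr rfl hcnts] at htel'
    have hhrec := hKR.h_rec (ν+1) (by omega) k hk1 hk2
    rw [Nat.add_sub_cancel] at hhrec
    have hcast : ((h (ν+1) k : ℕ) : ℝ)
        = ∑ l ∈ Finset.Icc 1 (C ν), (KRmat T B h (ν+1) k l : ℝ) * (h ν l : ℝ) := by
      rw [hhrec]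
      push_cast
      rfl
    have hexpand : ∑ l ∈ Finset.Icc 1 (C ν),
        (KRmat T B h (ν+1) k l : ℝ) * (α * (h ν l : ℝ) - vfun ν l)
        = α * ((h (ν+1) k : ℕ) : ℝ)
          - ∑ l ∈ Finset.Icc 1 (C ν), (KRmat T B h (ν+1) k l : ℝ) * vfun ν l := by
      rw [hcast, Finset.mul_sum, ← Finset.sum_sub_distrib]
      apply Finset.sum_congr rfl
      intro l hl
      ring
    rw [hexpand] at htel'
    rw [hvk]
    linarith
  have happ_le : ∀ n, n ≤ m → applyP T C B h m (vfun m) n = vfun m := by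
    intro n hn
    induction n with
    | zero => rfl
    | succ n ih =>
      show (if n + 1 ≤ m then vfun m
        else applyM T C B h (n+1) (applyP T C B h m (vfun m) n)) = vfun m
      rw [if_pos hn]
  have happ : ∀ n, m ≤ n → ∀ k, 1 ≤ k → k ≤ C n →
      applyP T C B h m (vfun m) n k = vfun n k := by
    intro n hn
    induction n, hn using Nat.le_induction with
    | base => intro k _ _; rw [happ_le m (le_refl m)]
    | succ n hn ih =>
      intro k hk1 hk2
      have hstep : applyP T C B h m (vfun m) (n+1)
          = applyM T C B h (n+1) (applyP T C B h m (vfun m) n) := by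
        show (if n + 1 ≤ m then vfun m else _) = _
        rw [if_neg (by omega : ¬ (n + 1 ≤ m))]
        rfl
      rw [hstep]
      simp only [applyM, Nat.add_sub_cancel]
      rw [hrec n hn k hk1 hk2]
      apply Finset.sum_congr rfl
      intro l hl
      rw [Finset.mem_Icc] at hl
      rw [ih l hl.1 hl.2]
  have hw : ∀ k, ∃ N : ℤ, 1 ≤ k → k ≤ C m → α * (h m k : ℝ) - vfun m k = N := by
    intro k
    by_cases hk : 1 ≤ k ∧ k ≤ C m
    · obtain ⟨N, hN⟩ := hvint m k hm1 hk.1 hk.2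
      exact ⟨N, fun _ _ => hN⟩
    · exact ⟨0, fun h1 h2 => absurd ⟨h1, h2⟩ hk⟩
  choose w hwspec using hw
  refine ⟨m, hm1, vfun m, w, ?_, ?_⟩
  · intro k hk1 hk2
    have := hwspec k hk1 hk2
    linarith
  · intro ε hε
    set θ := min (Real.pi / 8) (Real.pi * ε / 2) with hθ
    have hθ0 : 0 < θ := lt_min (by positivity) (by positivity)
    have hθπ : θ ≤ Real.pi := le_trans (min_le_left _ _) (by linarith)
    obtain ⟨N, hN1, hN2⟩ := hargN θ hθ0 hθπ
    rw [Filter.eventually_atTop]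
    refine ⟨max N m, fun n hn k hk1 hk2 => ?_⟩
    have hnN : N ≤ n := le_trans (le_max_left _ _) hn
    have hnm : m ≤ n := le_trans (le_max_right _ _) hn
    rw [happ n hnm k hk1 hk2]
    have hb := hvb θ hθ0 n k (le_trans hm1 hnm) hk1 hk2 (hN2 n hnN)
    have hle : θ / Real.pi ≤ ε / 2 := by
      have h1 : θ ≤ Real.pi * ε / 2 := min_le_right _ _
      rw [div_le_iff₀ hπ]
      calc θ ≤ Real.pi * ε / 2 := h1
        _ = ε / 2 * Real.pi := by ring
    linarith


end
end

section
/- Let (X,T) be a Cantor minimal system equipped with a proper nested Kakutani–Rohlin structure and let μ be a T-invariant Borel probability measure. Let λ = exp(2iπα) be a continuous eigenvalue of (X,T). Then at least one of the following holds: (1) there exists m ≥ 1 such that α·h_k(m) ∈ ℤ for every 1 ≤ k ≤ C(m) (so α is rational with a denominator dividing gcd(h_1(m),…,h_{C(m)}(m))); (2) there exist m ≥ 1 and an integer vector w ∈ ℤ^{C(m)} such that α = ⟨w, μ(m)⟩. -/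
open MeasureTheory Filter Topology Set Pointwise

noncomputable section

variable {X : Type} [TopologicalSpace X]

private lemma exp_arg_mul_I' {w : ℂ} (hw : w ≠ 0) :
    Complex.exp (Complex.arg w * Complex.I) = w / (‖w‖ : ℂ) := by
  rw [eq_div_iff (by simpa using hw : ((‖w‖ : ℝ) : ℂ) ≠ 0), mul_comm]
  exact Complex.norm_mul_exp_arg_mul_I w

private lemma exists_continuous_lift {Y : Type} [TopologicalSpace Y] [CompactSpace Y]
    [T2Space Y] [TotallyDisconnectedSpace Y] [Nonempty Y]
    {f : Y → ℂ} (hf : Continuous f) {c : ℝ} (hc : 0 < c)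
    (habs : ∀ x, ‖f x‖ = c) :
    ∃ φ : Y → ℝ, Continuous φ ∧
      ∀ x, f x = (c : ℂ) * Complex.exp (2 * Real.pi * Complex.I * (φ x)) := by
  classical
  have hne : ∀ x, f x ≠ 0 := by
    intro x hx
    have := habs x
    rw [hx] at this
    simp only [norm_zero] at this
    exact hc.ne' this.symm
  have hslit : ∀ a y : Y, dist (f y) (f a) < c → f y / f a ∈ Complex.slitPlane := by
    intro a y hd
    by_contra hs
    rw [Complex.mem_slitPlane_iff] at hs
    push_neg at hs
    obtain ⟨h1, h2⟩ := hs
    have habs1 : ‖f y / f a‖ = 1 := by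
      rw [norm_div, habs, habs, div_self hc.ne']
    have hz : f y / f a = ((f y / f a).re : ℂ) := by
      apply Complex.ext <;> simp [h2]
    have hre : (f y / f a).re = -1 := by
      have h3 := habs1
      rw [hz, Complex.norm_real, Real.norm_eq_abs] at h3
      rcases abs_eq (by norm_num : (0:ℝ) ≤ 1) |>.mp h3 with h | h
      · linarith
      · exact h
    have hfy : f y = -f a := by
      have h4 : f y / f a = -1 := by
        rw [hz, hre]; norm_num
      rw [div_eq_iff (hne a)] at h4
      rw [h4]; ring
    rw [hfy, dist_eq_norm] at hd
    have h5 : ‖-f a - f a‖ = 2 * c := by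
      have he : -f a - f a = -(2 * f a) := by ring
      rw [he, norm_neg, norm_mul, habs]
      norm_num
    rw [h5] at hd
    linarith
  have hVall : ∀ x : Y, ∃ V : Set Y, IsClopen V ∧ x ∈ V ∧ V ⊆ {y | dist (f y) (f x) < c} := by
    intro x
    have hopen : IsOpen {y : Y | dist (f y) (f x) < c} := by
      have he : {y : Y | dist (f y) (f x) < c} = f ⁻¹' Metric.ball (f x) c := by
        ext y; simp [Metric.mem_ball]
      rw [he]
      exact Metric.isOpen_ball.preimage hf
    exact compact_exists_isClopen_in_isOpen hopen (by simp [hc])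
  choose V hVclopen hVmem hVsub using hVall
  obtain ⟨s, hs⟩ := isCompact_univ.elim_finite_subcover V (fun x => (hVclopen x).2)
    (fun x _ => Set.mem_iUnion.2 ⟨x, hVmem x⟩)
  have x₀ : Y := Classical.arbitrary Y
  set L : List Y := s.toList with hL
  set g : ℕ → Y := fun i => L.getD i x₀ with hg
  have hcov : ∀ y : Y, ∃ i, i < L.length ∧ y ∈ V (g i) := by
    intro y
    obtain ⟨a, ha, hya⟩ := Set.mem_iUnion₂.1 (hs (Set.mem_univ y))
    have hmem : a ∈ L := by rw [hL]; exact Finset.mem_toList.2 ha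
    obtain ⟨i, hi, hieq⟩ := List.getElem_of_mem hmem
    refine ⟨i, hi, ?_⟩
    have : g i = a := by rw [hg]; simp only []; rw [List.getD_eq_getElem L x₀ hi, hieq]
    rwa [this]
  set H : Y → Y → ℝ :=
    fun a y => (Complex.arg (f a) + Complex.arg (f y / f a)) / (2 * Real.pi) with hH
  have hE : ∀ a y : Y, f y = (c:ℂ) * Complex.exp (2 * Real.pi * Complex.I * (H a y)) := by
    intro a y
    have hpc : ((2:ℂ) * Real.pi) ≠ 0 := by
      simp [Real.pi_ne_zero]
    have h1 : (2 * (Real.pi:ℂ) * Complex.I * ((H a y : ℝ) : ℂ))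
        = (Complex.arg (f a) : ℂ) * Complex.I + (Complex.arg (f y / f a) : ℂ) * Complex.I := by
      rw [hH]
      push_cast
      field_simp
    rw [h1, Complex.exp_add, exp_arg_mul_I' (hne a),
      exp_arg_mul_I' (div_ne_zero (hne y) (hne a))]
    rw [habs a, norm_div, habs, habs, div_self hc.ne']
    have hc0 : ((c:ℝ) : ℂ) ≠ 0 := Complex.ofReal_ne_zero.2 hc.ne'
    field_simp [hne a, hc0]
    simp
  refine ⟨fun y => H (g (Nat.find (hcov y))) y, ?_, fun y => hE _ y⟩
  rw [continuous_iff_continuousAt]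
  intro y0
  obtain ⟨hlen, hmem⟩ := Nat.find_spec (hcov y0)
  set i := Nat.find (hcov y0) with hidef
  set W : Set Y := V (g i) \ ⋃ j ∈ Finset.range i, V (g j) with hW
  have hWopen : IsOpen W := by
    rw [hW]
    exact (hVclopen _).2.sdiff (isClosed_biUnion_finset fun j _ => (hVclopen _).1)
  have hy0W : y0 ∈ W := by
    rw [hW]
    refine ⟨hmem, ?_⟩
    simp only [Set.mem_iUnion, Finset.mem_range, not_exists]
    intro j hj hjV
    exact Nat.find_min (hcov y0) hj ⟨hj.trans hlen, hjV⟩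
  have hixW : ∀ y ∈ W, Nat.find (hcov y) = i := by
    intro y hy
    rw [hW] at hy
    have hle : Nat.find (hcov y) ≤ i := Nat.find_le ⟨hlen, hy.1⟩
    rcases lt_or_eq_of_le hle with hlt | he
    · exfalso
      apply hy.2
      simp only [Set.mem_iUnion, Finset.mem_range]
      exact ⟨Nat.find (hcov y), hlt, (Nat.find_spec (hcov y)).2⟩
    · exact he
  have hcH : ContinuousAt (fun y => H (g i) y) y0 := by
    have hmem' : dist (f y0) (f (g i)) < c := hVsub _ hmem
    rw [hH]
    apply ContinuousAt.div_const
    apply ContinuousAt.add continuousAt_const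
    have hdiv : ContinuousAt (fun y => f y / f (g i)) y0 :=
      (hf.continuousAt).div continuousAt_const (hne (g i))
    have harg : (fun y => (f y / f (g i)).arg) = Complex.arg ∘ (fun y => f y / f (g i)) := rfl
    rw [harg]
    exact ContinuousAt.comp (f := fun y => f y / f (g i)) (g := Complex.arg)
      (Complex.continuousAt_arg (hslit _ _ hmem')) hdiv
  apply hcH.congr
  filter_upwards [hWopen.mem_nhds hy0W] with y hy
  rw [hixW y hy]

private lemma piece_refine {X : Type} [TopologicalSpace X] {T : X ≃ₜ X} {C : ℕ → ℕ}
    {B : ℕ → ℕ → Set X} {h : ℕ → ℕ → ℕ} (hKR : KRStruct T C B h)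
    {n : ℕ} (hn : 1 ≤ n) :
    ∀ M, n ≤ M → ∀ k, 1 ≤ k → k ≤ C M → ∀ j, j < h M k →
      ∃ l i, 1 ≤ l ∧ l ≤ C n ∧ i < h n l ∧
        (T : X → X)^[j] ⁻¹' B M k ⊆ (T : X → X)^[i] ⁻¹' B n l := by
  intro M
  induction M with
  | zero => intro hM; omega
  | succ M ih =>
    intro hM k hk1 hk2 j hj
    rcases Nat.lt_or_ge n (M+1) with hlt | hge
    · have hnM : n ≤ M := by omega
      have hM1 : 1 ≤ M := le_trans hn hnM
      obtain ⟨l, i, hl1, hl2, hi, hsub⟩ := hKR.nested M hM1 k hk1 hk2 j hj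
      obtain ⟨l', i', hl1', hl2', hi', hsub'⟩ := ih hnM l hl1 hl2 i hi
      exact ⟨l', i', hl1', hl2', hi', hsub.trans hsub'⟩
    · have he : n = M + 1 := by omega
      subst he
      exact ⟨k, j, hk1, hk2, hj, subset_rfl⟩


/-- Corollary 3.7: if `exp(2iπα)` is a continuous eigenvalue of `(X,T)` and `μ` is a
`T`-invariant probability measure, then either `α h_k(m) ∈ ℤ` for all `k` at some level
`m` (so `α` is rational with denominator dividing `gcd(h_k(m))`), or `α = ⟨w, μ(m)⟩` for
some level `m` and integer vector `w`. -/
theorem continuous_eigenvalue_rational_or_from_measure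
    {X : Type} [TopologicalSpace X] [MeasurableSpace X] [BorelSpace X]
    (T : X ≃ₜ X) (hCM : CantorMinimal T)
    (C : ℕ → ℕ) (B : ℕ → ℕ → Set X) (h : ℕ → ℕ → ℕ) (hKR : KRStruct T C B h)
    (μ : Measure X) (hprob : IsProbabilityMeasure μ)
    (hinv : MeasurePreserving (⇑T) μ μ)
    (α : ℝ) (heig : ContEigenvalue T (Complex.exp (2 * Real.pi * Complex.I * α))) :
    (∃ m, 1 ≤ m ∧ ∀ k, 1 ≤ k → k ≤ C m → ∃ z : ℤ, α * (h m k : ℝ) = (z : ℝ)) ∨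
    (∃ m, 1 ≤ m ∧ ∃ w : ℕ → ℤ,
      α = ∑ k ∈ Finset.Icc 1 (C m), (w k : ℝ) * (μ (B m k)).toReal) := by
  classical
  obtain ⟨hcomp, hmetr, htd, hnonempty, -, hdense⟩ := hCM
  haveI := hcomp
  haveI := hmetr
  haveI := htd
  haveI := hnonempty
  haveI := hprob
  obtain ⟨f, hfc, hfne, hfeig⟩ := heig
  set lam : ℂ := Complex.exp (2 * Real.pi * Complex.I * α) with hlam
  have habs_lam : ‖lam‖ = 1 := by
    rw [hlam, Complex.norm_exp]
    norm_num [Complex.mul_re, Complex.mul_im]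
  obtain ⟨x₁, hx₁⟩ : ∃ x, f x ≠ 0 := by
    by_contra hcon
    push_neg at hcon
    exact hfne (funext fun x => hcon x)
  have habs_T : ∀ x, ‖f (T x)‖ = ‖f x‖ := by
    intro x; rw [hfeig, norm_mul, habs_lam, one_mul]
  have habs_iter : ∀ n : ℕ, ∀ x, ‖f ((T : X → X)^[n] x)‖ = ‖f x‖ := by
    intro n
    induction n with
    | zero => intro x; simp
    | succ n ih =>
      intro x
      rw [Function.iterate_succ_apply', habs_T, ih]
  have habs_iter' : ∀ n : ℕ, ∀ x,
      ‖f ((T.symm : X → X)^[n] x)‖ = ‖f x‖ := by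
    intro n
    induction n with
    | zero => intro x; simp
    | succ n ih =>
      intro x
      have h1 : (T : X → X) ((T.symm : X → X)^[n+1] x) = (T.symm : X → X)^[n] x := by
        rw [Function.iterate_succ_apply']
        exact T.apply_symm_apply _
      have h2 := habs_T ((T.symm : X → X)^[n+1] x)
      rw [h1] at h2
      rw [← h2, ih]
  set c : ℝ := ‖f x₁‖ with hcdef
  have hc : 0 < c := by
    rw [hcdef]
    exact norm_pos_iff.mpr hx₁
  have hgconst : (fun x => ‖f x‖) = fun _ => c := by
    apply Continuous.ext_on (hdense x₁) (continuous_norm.comp hfc) continuous_const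
    rintro y ⟨n, hn | hn⟩
    · rw [← hn]
      exact habs_iter n x₁
    · rw [← hn]
      exact habs_iter' n x₁
  have habsf : ∀ x, ‖f x‖ = c := fun x => congrFun hgconst x
  obtain ⟨φ, hφc, hφE⟩ := exists_continuous_lift hfc hc habsf
  set ψ : X → ℝ := fun x => φ (T x) - φ x - α with hψdef
  have hψc : Continuous ψ := ((hφc.comp T.continuous).sub hφc).sub continuous_const
  have hψint : ∀ x, ∃ z : ℤ, ψ x = z := by
    intro x
    have hc0 : ((c:ℝ) : ℂ) ≠ 0 := Complex.ofReal_ne_zero.2 hc.ne'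
    have h2πI : (2 * (Real.pi:ℂ) * Complex.I) ≠ 0 := by
      simp [Real.pi_ne_zero, Complex.I_ne_zero]
    have key : Complex.exp (2 * (Real.pi:ℂ) * Complex.I * (φ (T x) : ℝ))
        = Complex.exp (2 * (Real.pi:ℂ) * Complex.I * (α:ℝ))
          * Complex.exp (2 * (Real.pi:ℂ) * Complex.I * (φ x : ℝ)) := by
      have hfx := hfeig x
      rw [hφE (T x), hφE x, hlam] at hfx
      apply mul_left_cancel₀ hc0
      rw [hfx]; ring
    rw [← Complex.exp_add] at key
    obtain ⟨n, hn⟩ := Complex.exp_eq_exp_iff_exists_int.1 key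
    have h3 : (2 * (Real.pi:ℂ) * Complex.I) * ((φ (T x) : ℝ) : ℂ)
        = (2 * (Real.pi:ℂ) * Complex.I) * (((α:ℝ):ℂ) + ((φ x : ℝ):ℂ) + (n:ℂ)) := by
      rw [hn]; ring
    have h4 := mul_left_cancel₀ h2πI h3
    have h5 : φ (T x) = α + φ x + n := by exact_mod_cast h4
    exact ⟨n, by rw [hψdef]; simp only []; linarith⟩
  choose ζ hζ using hψint
  set W : ℤ → Set X := fun z => ψ ⁻¹' {(z:ℝ)} with hWdef
  have hWclopen : ∀ z, IsClopen (W z) := by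
    intro z
    constructor
    · exact isClosed_singleton.preimage hψc
    · have he : W z = ψ ⁻¹' (Set.Ioo ((z:ℝ) - 1/2) ((z:ℝ) + 1/2)) := by
        ext x
        simp only [hWdef, Set.mem_preimage, Set.mem_singleton_iff, Set.mem_Ioo]
        constructor
        · rintro hx; rw [hx]; constructor <;> linarith
        · rintro ⟨h1, h2⟩
          have hx := hζ x
          rw [hx] at h1 h2 ⊢
          have i1 : z - 1 < ζ x := by exact_mod_cast (by linarith : (z:ℝ) - 1 < (ζ x : ℝ))
          have i2 : ζ x < z + 1 := by exact_mod_cast (by linarith : (ζ x : ℝ) < (z:ℝ) + 1)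
          have : ζ x = z := by omega
          exact_mod_cast this
      rw [he]
      exact isOpen_Ioo.preimage hψc
  obtain ⟨F, hF⟩ := isCompact_univ.elim_finite_subcover W (fun z => (hWclopen z).2)
    (fun x _ => Set.mem_iUnion.2 ⟨ζ x, by
      rw [hWdef]
      simp only [Set.mem_preimage, Set.mem_singleton_iff]
      exact hζ x⟩)
  have hrep := fun z => hKR.clopen_gen (W z) (hWclopen z)
  choose nn hnn1 SS hSS1 hSS2 using hrep
  set M : ℕ := max 1 (F.sup nn) with hMdef
  have hM1 : 1 ≤ M := le_max_left _ _
  have hMz : ∀ z ∈ F, nn z ≤ M := fun z hz => le_trans (Finset.le_sup hz) (le_max_right _ _)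
  have hconst : ∀ k, 1 ≤ k → k ≤ C M → ∀ j, j < h M k →
      ∀ x, x ∈ (T:X→X)^[j] ⁻¹' B M k → ∀ y, y ∈ (T:X→X)^[j] ⁻¹' B M k → ψ y = ψ x := by
    intro k hk1 hk2 j hj x hx y hy
    obtain ⟨z, hzF, hzx⟩ := Set.mem_iUnion₂.1 (hF (Set.mem_univ x))
    obtain ⟨l, i, hl1, hl2, hi, hsub⟩ :=
      piece_refine hKR (hnn1 z) M (hMz z hzF) k hk1 hk2 j hj
    have hxW : x ∈ ⋃ p ∈ SS z, (T:X→X)^[p.2] ⁻¹' B (nn z) p.1 := by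
      rw [← hSS2 z]; exact hzx
    obtain ⟨p, hpS, hxp⟩ := Set.mem_iUnion₂.1 hxW
    have hpval := hSS1 z p hpS
    have hxl := hsub hx
    have hpe : (p.1, p.2) = ((l, i) : ℕ × ℕ) := by
      by_contra hne'
      exact Set.disjoint_left.1
        (hKR.towers_disjoint (nn z) (hnn1 z) p.1 p.2 l i hpval.1 hpval.2.1 hpval.2.2
          hl1 hl2 hi hne') hxp hxl
    have hliS : ((l, i) : ℕ × ℕ) ∈ SS z := by
      rw [← hpe]; exact hpS
    have hsubW : (T:X→X)^[j] ⁻¹' B M k ⊆ W z := by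
      refine hsub.trans ?_
      rw [hSS2 z]
      exact fun u hu => Set.mem_biUnion hliS hu
    have h1 : ψ x = (z:ℝ) := by
      have := hzx
      rw [hWdef] at this
      simpa using this
    have h2 : ψ y = (z:ℝ) := by
      have := hsubW hy
      rw [hWdef] at this
      simpa using this
    rw [h1, h2]
  set piece : (Σ _ : ℕ, ℕ) → Set X := fun p => (T : X → X)^[p.2] ⁻¹' B M p.1 with hpiecedef
  set t : Finset (Σ _ : ℕ, ℕ) := (Finset.Icc 1 (C M)).sigma (fun k => Finset.range (h M k))
    with htdef
  have hmem_t : ∀ p : (Σ _ : ℕ, ℕ), p ∈ t ↔ (1 ≤ p.1 ∧ p.1 ≤ C M) ∧ p.2 < h M p.1 := by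
    intro p
    rw [htdef, Finset.mem_sigma, Finset.mem_Icc, Finset.mem_range]
  have huniv : (⋃ p ∈ t, piece p) = Set.univ := by
    apply Set.eq_univ_of_forall
    intro x
    have hx : x ∈ ⋃ k ∈ Set.Icc 1 (C M), ⋃ j ∈ Set.Iio (h M k), (T:X→X)^[j] ⁻¹' B M k := by
      rw [hKR.towers_cover M hM1]; trivial
    obtain ⟨k, hk, rest⟩ := Set.mem_iUnion₂.1 hx
    obtain ⟨j, hj, hxj⟩ := Set.mem_iUnion₂.1 rest
    exact Set.mem_iUnion₂.2 ⟨⟨k, j⟩, (hmem_t ⟨k, j⟩).2 ⟨⟨hk.1, hk.2⟩, hj⟩, hxj⟩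
  have hmeas : ∀ p ∈ t, MeasurableSet (piece p) := by
    intro p hp
    obtain ⟨⟨hp1, hp2⟩, hp3⟩ := (hmem_t p).1 hp
    exact ((hKR.B_clopen M p.1 hM1 hp1 hp2).preimage (T.continuous.iterate p.2)).1.measurableSet
  have hψInt : Integrable ψ μ :=
    hψc.integrable_of_hasCompactSupport ((isClosed_tsupport ψ).isCompact)
  have hdisj : Set.Pairwise ↑t (Function.onFun Disjoint piece) := by
    intro p hp q hq hpq
    obtain ⟨⟨hp1, hp2⟩, hp3⟩ := (hmem_t p).1 (Finset.mem_coe.1 hp)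
    obtain ⟨⟨hq1, hq2⟩, hq3⟩ := (hmem_t q).1 (Finset.mem_coe.1 hq)
    have hne' : (p.1, p.2) ≠ (q.1, q.2) := by
      intro he
      apply hpq
      obtain ⟨he1, he2⟩ := Prod.mk.injEq _ _ _ _ ▸ he
      exact Sigma.ext he1 (heq_of_eq he2)
    exact hKR.towers_disjoint M hM1 p.1 p.2 q.1 q.2 hp1 hp2 hp3 hq1 hq2 hq3 hne'
  have hsum : ∫ x, ψ x ∂μ = ∑ p ∈ t, ∫ x in piece p, ψ x ∂μ := by
    rw [← MeasureTheory.setIntegral_univ, ← huniv]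
    exact MeasureTheory.integral_biUnion_finset t hmeas hdisj (fun p _ => hψInt.integrableOn)
  have hpiece_ne : ∀ p : (Σ _ : ℕ, ℕ), ∃ x, p ∈ t → x ∈ piece p := by
    intro p
    by_cases hp : p ∈ t
    · obtain ⟨⟨hp1, hp2⟩, hp3⟩ := (hmem_t p).1 hp
      obtain ⟨x, hx⟩ := hKR.B_nonempty M p.1 hM1 hp1 hp2
      refine ⟨(T.symm : X → X)^[p.2] x, fun _ => ?_⟩
      show (T : X → X)^[p.2] ((T.symm : X → X)^[p.2] x) ∈ B M p.1
      have hli : Function.LeftInverse (T : X → X) (T.symm : X → X) := T.apply_symm_apply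
      rw [hli.iterate p.2 x]
      exact hx
    · exact ⟨Classical.arbitrary X, fun hmem => absurd hmem hp⟩
  choose pt hpt using hpiece_ne
  set val : (Σ _ : ℕ, ℕ) → ℤ := fun p => ζ (pt p) with hvaldef
  have hval : ∀ p ∈ t, ∀ x ∈ piece p, ψ x = (val p : ℝ) := by
    intro p hp x hx
    obtain ⟨⟨hp1, hp2⟩, hp3⟩ := (hmem_t p).1 hp
    have hx0 : pt p ∈ piece p := hpt p hp
    have he := hconst p.1 hp1 hp2 p.2 hp3 (pt p) hx0 x hx
    rw [he, hvaldef]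
    exact hζ (pt p)
  have hμpiece : ∀ p ∈ t, μ (piece p) = μ (B M p.1) := by
    intro p hp
    obtain ⟨⟨hp1, hp2⟩, hp3⟩ := (hmem_t p).1 hp
    exact (hinv.iterate p.2).measure_preimage
      ((hKR.B_clopen M p.1 hM1 hp1 hp2).1.measurableSet.nullMeasurableSet)
  have hpint : ∀ p ∈ t, ∫ x in piece p, ψ x ∂μ = (val p : ℝ) * (μ (B M p.1)).toReal := by
    intro p hp
    rw [MeasureTheory.setIntegral_congr_fun (hmeas p hp) (fun x hx => hval p hp x hx),
      MeasureTheory.setIntegral_const, measureReal_def, hμpiece p hp, smul_eq_mul, mul_comm]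
  have hφInt : Integrable φ μ :=
    hφc.integrable_of_hasCompactSupport ((isClosed_tsupport φ).isCompact)
  have hφTInt : Integrable (fun x => φ (T x)) μ :=
    (hφc.comp T.continuous).integrable_of_hasCompactSupport ((isClosed_tsupport _).isCompact)
  have hmapint : ∫ x, φ (T x) ∂μ = ∫ x, φ x ∂μ := by
    conv_rhs => rw [← hinv.map_eq]
    rw [MeasureTheory.integral_map (T.continuous.measurable.aemeasurable)
      hφc.aestronglyMeasurable]
  have hψeq : ∫ x, ψ x ∂μ = -α := by
    have he : ∫ x, ψ x ∂μ = (∫ x, φ (T x) ∂μ) - (∫ x, φ x ∂μ) - α := by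
      rw [hψdef]
      simp only []
      have hsub1 : Integrable (fun x => φ (T x) - φ x) μ := hφTInt.sub hφInt
      rw [MeasureTheory.integral_sub hsub1 (MeasureTheory.integrable_const α),
        MeasureTheory.integral_sub hφTInt hφInt, MeasureTheory.integral_const]
      simp [measure_univ]
    rw [he, hmapint]; ring
  refine Or.inr ⟨M, hM1, fun k => -∑ j ∈ Finset.range (h M k), val ⟨k, j⟩, ?_⟩
  have hae : α = -∑ p ∈ t, (val p : ℝ) * (μ (B M p.1)).toReal := by
    have h1 : ∑ p ∈ t, (val p : ℝ) * (μ (B M p.1)).toReal = -α := by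
      rw [← hψeq, hsum]
      exact (Finset.sum_congr rfl hpint).symm
    linarith
  rw [hae, htdef, Finset.sum_sigma, ← Finset.sum_neg_distrib]
  apply Finset.sum_congr rfl
  intro k hk
  push_cast
  rw [neg_mul, Finset.sum_mul]

end
end

section
/- Under the stated hypotheses, the vectors v_1,…,v_{η−1} are linearly independent over ℝ, and the vectors w_1,…,w_{η−1}, H are linearly independent over ℝ. -/
open Matrix in
/-- ℚ-linearly independent families in `ℚ^d` stay linearly independent after
casting to `ℝ`. -/
theorem ratCast_rows_linearIndependent {ι : Type*} [Fintype ι] {d : ℕ}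
    {A : ι → Fin d → ℚ} (h : LinearIndependent ℚ A) :
    LinearIndependent ℝ (fun i k => ((A i k : ℚ) : ℝ)) := by
  classical
  set M : Matrix ι (Fin d) ℚ := Matrix.of A with hMdef
  have hM : LinearIndependent ℚ (fun i => M i) := h
  have hinj : Function.Injective M.vecMul := Matrix.vecMul_injective_iff.mpr hM
  have hker : LinearMap.ker (Matrix.toLin' Mᵀ) = ⊥ := by
    rw [LinearMap.ker_eq_bot]
    intro x y hxy
    apply hinj
    simpa [Matrix.toLin'_apply, Matrix.mulVec_transpose] using hxy
  obtain ⟨g, hg⟩ := (Matrix.toLin' Mᵀ).exists_leftInverse_of_injective hker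
  set B : Matrix ι (Fin d) ℚ := LinearMap.toMatrix' g with hBdef
  have hone : B * Mᵀ = 1 := by
    apply Matrix.toLin'.injective
    rw [Matrix.toLin'_mul, Matrix.toLin'_one, hBdef, Matrix.toLin'_toMatrix']
    exact hg
  set c : ℚ →+* ℝ := algebraMap ℚ ℝ with hcdef
  have hone' : (B.map c) * ((M.map c)ᵀ) = 1 := by
    rw [← Matrix.transpose_map, ← Matrix.map_mul, hone, Matrix.map_one c c.map_zero c.map_one]
  have hinj' : Function.Injective (M.map c).vecMul := by
    intro x y hxy
    have h2 := congrArg (fun z => (B.map c).mulVec z)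
      (by simpa [Matrix.mulVec_transpose] using hxy :
        ((M.map c)ᵀ).mulVec x = ((M.map c)ᵀ).mulVec y)
    simpa [Matrix.mulVec_mulVec, hone', Matrix.one_mulVec] using h2
  have hli := Matrix.vecMul_injective_iff.mp hinj'
  have heq : (fun i k => ((A i k : ℚ) : ℝ)) = fun i => (M.map c) i := by
    funext i k
    simp [hMdef, hcdef, Matrix.map_apply]
  rw [heq]
  exact hli

/-- Proposition 4.3: with `⟨H,μ⟩ = 1`, `α_i H = v_i + w_i`, `⟨v_i, μ⟩ = 0` and
`1, α_1, …, α_{η-1}` rationally independent, the vectors `v_1, …, v_{η-1}` are linearly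
independent and the vectors `w_1, …, w_{η-1}, H` are linearly independent. -/
theorem vectors_linearly_independent
    (d η : ℕ) (hd : 1 ≤ d) (hη : 1 ≤ η)
    (μ : Fin d → ℝ) (H : Fin d → ℤ)
    (hHμ : ∑ k, (H k : ℝ) * μ k = 1)
    (α : Fin (η - 1) → ℝ) (v : Fin (η - 1) → Fin d → ℝ) (w : Fin (η - 1) → Fin d → ℤ)
    (hdecomp : ∀ i k, α i * (H k : ℝ) = v i k + (w i k : ℝ))
    (horth : ∀ i, ∑ k, v i k * μ k = 0)
    (hindep : ∀ (q : ℚ) (c : Fin (η - 1) → ℚ),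
      (q : ℝ) + ∑ i, (c i : ℝ) * α i = 0 → q = 0 ∧ ∀ i, c i = 0) :
    LinearIndependent ℝ v ∧
    LinearIndependent ℝ (fun o : Option (Fin (η - 1)) =>
      o.elim (fun k => (H k : ℝ)) (fun i => fun k => (w i k : ℝ))) := by
  classical
  -- the eigenvalue relation `α i = ⟨w i, μ⟩`
  have halpha : ∀ i, ∑ k, (w i k : ℝ) * μ k = α i := by
    intro i
    calc ∑ k, (w i k : ℝ) * μ k
        = ∑ k, (α i * ((H k : ℝ) * μ k) - v i k * μ k) :=
          Finset.sum_congr rfl fun k _ => by linear_combination -μ k * hdecomp i k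
      _ = α i * ∑ k, (H k : ℝ) * μ k - ∑ k, v i k * μ k := by
          rw [Finset.sum_sub_distrib, Finset.mul_sum]
      _ = α i := by rw [hHμ, horth i]; ring
  -- the rational family `w_1, …, w_{η-1}, H`
  set G : Option (Fin (η - 1)) → Fin d → ℚ :=
    fun o k => o.elim ((H k : ℚ)) (fun i => ((w i k : ℚ))) with hGdef
  have hGli : LinearIndependent ℚ G := by
    rw [Fintype.linearIndependent_iff]
    intro cq hcq
    have hk : ∀ k, cq none * (H k : ℚ) + ∑ i, cq (some i) * (w i k : ℚ) = 0 := by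
      intro k
      have h0 := congrFun hcq k
      simp only [Finset.sum_apply, Pi.smul_apply, smul_eq_mul, Pi.zero_apply] at h0
      rw [Fintype.sum_option] at h0
      simpa [hGdef] using h0
    have hpt : ∀ k, (cq none : ℝ) * (H k : ℝ) + ∑ i, (cq (some i) : ℝ) * (w i k : ℝ) = 0 := by
      intro k
      have h1 := congrArg (fun q : ℚ => (q : ℝ)) (hk k)
      push_cast at h1
      simpa using h1
    have e1 : ∀ k, ((cq none : ℝ) * (H k : ℝ) + ∑ i, (cq (some i) : ℝ) * (w i k : ℝ)) * μ k
        = (cq none : ℝ) * ((H k : ℝ) * μ k) + ∑ i, (cq (some i) : ℝ) * ((w i k : ℝ) * μ k) := by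
      intro k
      rw [add_mul, Finset.sum_mul, mul_assoc]
      congr 1
      exact Finset.sum_congr rfl fun i _ => mul_assoc _ _ _
    have key : ((cq none : ℚ) : ℝ) + ∑ i, ((cq (some i) : ℚ) : ℝ) * α i = 0 := by
      calc ((cq none : ℚ) : ℝ) + ∑ i, ((cq (some i) : ℚ) : ℝ) * α i
          = (cq none : ℝ) * ∑ k, (H k : ℝ) * μ k
            + ∑ i, (cq (some i) : ℝ) * ∑ k, (w i k : ℝ) * μ k := by
            rw [hHμ, mul_one]
            congr 1
            exact Finset.sum_congr rfl fun i _ => by rw [halpha i]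
        _ = ∑ k, (cq none : ℝ) * ((H k : ℝ) * μ k)
            + ∑ i, ∑ k, (cq (some i) : ℝ) * ((w i k : ℝ) * μ k) := by
            rw [Finset.mul_sum]
            congr 1
            exact Finset.sum_congr rfl fun i _ => Finset.mul_sum _ _ _
        _ = ∑ k, ((cq none : ℝ) * ((H k : ℝ) * μ k)
            + ∑ i, (cq (some i) : ℝ) * ((w i k : ℝ) * μ k)) := by
            rw [Finset.sum_add_distrib, Finset.sum_comm]
        _ = ∑ k, ((cq none : ℝ) * (H k : ℝ) + ∑ i, (cq (some i) : ℝ) * (w i k : ℝ)) * μ k :=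
            Finset.sum_congr rfl fun k _ => (e1 k).symm
        _ = 0 := Finset.sum_eq_zero fun k _ => by rw [hpt k, zero_mul]
    obtain ⟨h1, h2⟩ := hindep (cq none) (fun i => cq (some i)) key
    intro o
    cases o with
    | none => exact h1
    | some i => exact h2 i
  have hW : LinearIndependent ℝ (fun o : Option (Fin (η - 1)) => fun k => ((G o k : ℚ) : ℝ)) :=
    ratCast_rows_linearIndependent hGli
  have hfam : (fun o : Option (Fin (η - 1)) =>
      o.elim (fun k => (H k : ℝ)) (fun i => fun k => (w i k : ℝ)))
      = fun o => fun k => ((G o k : ℚ) : ℝ) := by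
    funext o k
    cases o <;> simp [hGdef]
  have hW' : LinearIndependent ℝ (fun o : Option (Fin (η - 1)) =>
      o.elim (fun k => (H k : ℝ)) (fun i => fun k => (w i k : ℝ))) := by
    rw [hfam]; exact hW
  refine ⟨?_, hW'⟩
  -- linear independence of the `v i`
  rw [Fintype.linearIndependent_iff]
  intro g hg
  have hgk : ∀ k, ∑ i, g i * v i k = 0 := by
    intro k
    have h0 := congrFun hg k
    simpa [Finset.sum_apply] using h0
  set creal : Option (Fin (η - 1)) → ℝ := fun o => o.elim (-(∑ i, g i * α i)) g with hcr
  have hz : ∑ o, creal o • (fun k => ((G o k : ℚ) : ℝ)) = 0 := by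
    funext k
    simp only [Finset.sum_apply, Pi.smul_apply, smul_eq_mul, Pi.zero_apply]
    rw [Fintype.sum_option]
    have e2 : ∑ i, g i * (w i k : ℝ) = (∑ i, g i * α i) * (H k : ℝ) - ∑ i, g i * v i k := by
      rw [Finset.sum_mul, ← Finset.sum_sub_distrib]
      exact Finset.sum_congr rfl fun i _ => by linear_combination -g i * hdecomp i k
    have : creal none * ((G none k : ℚ) : ℝ)
        + ∑ i, creal (some i) * ((G (some i) k : ℚ) : ℝ)
        = -(∑ i, g i * α i) * (H k : ℝ) + ∑ i, g i * (w i k : ℝ) := by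
      simp [hcr, hGdef]
    rw [this, e2, hgk k]
    ring
  have hall := Fintype.linearIndependent_iff.mp hW creal hz
  intro i
  exact hall (some i)
end

section
/- Let A be the 2×2 integer matrix with rows (1,1) and (1,0), let φ = (1+√5)/2, and let Eˢ = {v ∈ ℝ² : Aⁿv → 0 as n → ∞} be the stable line of A. For every sequence (ε_n; n ≥ 1) of real numbers in (0, φ^{−1}], there exist a sequence (k_n; n ≥ 2) of integers with k_n ≥ 2 for all n and a real number α > 0 such that, setting K_n = k_2 + ⋯ + k_n, for every n ≥ 2 one can write α·A^{K_n}(1,1)ᵀ = w_n + z_n with z_n ∈ ℤ² and ‖w_n‖ ≤ 4ε_n; moreover α can be chosen so that α·(1,1)ᵀ ∉ ℤ² + Eˢ. -/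
open Filter Topology Matrix

noncomputable section

/-- The Fibonacci matrix `A = [[1,1],[1,0]]`. -/
def Afib : Matrix (Fin 2) (Fin 2) ℝ := !![1, 1; 1, 0]

/-- The stable line `Eˢ = {v ∈ ℝ² : Aⁿ v → 0}` of the Fibonacci matrix. -/
def EsFib : Set (Fin 2 → ℝ) := {v | Tendsto (fun n => Afib ^ n *ᵥ v) atTop (𝓝 0)}

namespace FibAux

def ph : ℝ := (1 + Real.sqrt 5) / 2
def ps : ℝ := (1 - Real.sqrt 5) / 2

lemma sqrt5_sq : Real.sqrt 5 * Real.sqrt 5 = 5 :=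
  Real.mul_self_sqrt (by norm_num)

lemma sqrt5_pos : 0 < Real.sqrt 5 := Real.sqrt_pos.mpr (by norm_num)

lemma sqrt5_gt_two : 2 < Real.sqrt 5 := by
  nlinarith [sqrt5_sq, sqrt5_pos]

lemma one_lt_ph : 1 < ph := by unfold ph; nlinarith [sqrt5_gt_two]
lemma ph_pos : 0 < ph := lt_trans one_pos one_lt_ph
lemma ph_sq : ph ^ 2 = ph + 1 := by unfold ph; nlinarith [sqrt5_sq]
lemma ph_add_ps : ph + ps = 1 := by unfold ph ps; ring
lemma ph_mul_ps : ph * ps = -1 := by unfold ph ps; nlinarith [sqrt5_sq]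
lemma ph_sub_ps : ph - ps = Real.sqrt 5 := by unfold ph ps; ring
lemma two_le_ph_sq : 2 ≤ ph ^ 2 := by rw [ph_sq]; linarith [one_lt_ph]

def r : ℝ := ph⁻¹
lemma r_pos : 0 < r := inv_pos.mpr ph_pos
lemma r_lt_one : r < 1 := inv_lt_one_of_one_lt₀ one_lt_ph
lemma r_mul_ph : r * ph = 1 := inv_mul_cancel₀ ph_pos.ne'
lemma r_eq : r = ph - 1 := by
  have h := ph_sq
  have hne := ph_pos.ne'
  unfold r
  field_simp
  nlinarith
lemma ps_eq_neg_r : ps = -r := by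
  rw [r_eq]; have := ph_add_ps; linarith
lemma one_sub_r : 1 - r = ph⁻¹ ^ 2 := by
  rw [r_eq]
  have h := ph_sq
  have hne := ph_pos.ne'
  field_simp
  nlinarith

lemma geom_sum : ∑' i : ℕ, r ^ i = ph ^ 2 := by
  rw [tsum_geometric_of_lt_one r_pos.le r_lt_one, one_sub_r, ← inv_pow, inv_inv]

lemma summable_geom : Summable (fun i : ℕ => r ^ i) :=
  summable_geometric_of_lt_one r_pos.le r_lt_one

lemma rpow_mul_ph_pow (m : ℕ) : r ^ m * ph ^ m = 1 := by
  rw [← mul_pow, r_mul_ph, one_pow]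

lemma r_sq_mul_ph_sq : r ^ 2 * ph ^ 2 = 1 := rpow_mul_ph_pow 2

-- ps^L = fib(L+1) - fib L * ph
lemma ps_pow (L : ℕ) : ps ^ L = (Nat.fib (L+1) : ℝ) - (Nat.fib L : ℝ) * ph := by
  induction L with
  | zero => simp
  | succ L ih =>
    have h : ps ^ (L+1) = ps ^ L * ps := by ring
    rw [h, ih, Nat.fib_add_two]
    push_cast
    have hps : ps = 1 - ph := by linarith [ph_add_ps]
    rw [hps]
    nlinarith [ph_sq]

lemma ph_pow_conj (L : ℕ) : ph ^ L = (Nat.fib (L+1) : ℝ) - (Nat.fib L : ℝ) * ps := by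
  induction L with
  | zero => simp
  | succ L ih =>
    have h : ph ^ (L+1) = ph ^ L * ph := by ring
    rw [h, ih, Nat.fib_add_two]
    push_cast
    have hps : ps = 1 - ph := by linarith [ph_add_ps]
    rw [hps]
    nlinarith [ph_sq]

lemma r_pow_even (L : ℕ) (hL : Even L) : r ^ L = ps ^ L := by
  rw [ps_eq_neg_r, hL.neg_pow]

lemma binet (m : ℕ) : Real.sqrt 5 * (Nat.fib m : ℝ) = ph ^ m - ps ^ m := by
  rw [ps_pow, ph_pow_conj, ← ph_sub_ps]; ring

lemma fib_le_ph_pow (m : ℕ) : (Nat.fib m : ℝ) ≤ ph ^ m := by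
  induction m using Nat.strong_induction_on with
  | _ m ih =>
    match m with
    | 0 => simp
    | 1 => simpa using one_lt_ph.le
    | (m+2) =>
      rw [Nat.fib_add_two]
      push_cast
      have h1 := ih m (by omega)
      have h2 := ih (m+1) (by omega)
      have h : ph ^ (m+2) = ph ^ m * ph ^ 2 := by ring
      rw [h, ph_sq]
      have hm : ph ^ (m+1) = ph ^ m * ph := by ring
      nlinarith [pow_pos ph_pos m]

lemma abs_ps_pow (m : ℕ) : |ps ^ m| ≤ r ^ m := by
  rw [abs_pow, ps_eq_neg_r, abs_neg, abs_of_pos r_pos]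

/-- key low-frequency bound -/
lemma term_bound (L t : ℕ) (hL : Even L) :
    |r ^ L * (Nat.fib (L + t) : ℝ) - (Nat.fib t : ℝ)| ≤ r ^ t := by
  have h5 : Real.sqrt 5 * (r ^ L * (Nat.fib (L + t) : ℝ) - (Nat.fib t : ℝ))
      = ps ^ t - ps ^ (L + (L + t)) := by
    rw [r_pow_even L hL]
    have b1 := binet (L + t)
    have b2 := binet t
    have hphps : (ps * ph) ^ L = 1 := by
      rw [mul_comm, ph_mul_ps]; exact hL.neg_one_pow
    have hthis : ps ^ L * ph ^ (L + t) = ph ^ t := by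
      rw [pow_add, ← mul_assoc, ← mul_pow, hphps, one_mul]
    have hpa : ps ^ (L + (L + t)) = ps ^ L * ps ^ (L + t) := pow_add ps L (L + t)
    linear_combination ps ^ L * b1 - b2 + hpa + hthis
  have habs : |r ^ L * (Nat.fib (L + t) : ℝ) - (Nat.fib t : ℝ)| =
      |ps ^ t - ps ^ (L + (L + t))| / Real.sqrt 5 := by
    rw [← h5, abs_mul, abs_of_pos sqrt5_pos]
    field_simp
  rw [habs]
  have h1 : |ps ^ t - ps ^ (L + (L + t))| ≤ r ^ t + r ^ (L + (L + t)) := by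
    calc |ps ^ t - ps ^ (L + (L + t))| ≤ |ps ^ t| + |ps ^ (L + (L + t))| := abs_sub _ _
    _ ≤ r ^ t + r ^ (L + (L + t)) := add_le_add (abs_ps_pow _) (abs_ps_pow _)
  have h2 : r ^ (L + (L + t)) ≤ r ^ t :=
    pow_le_pow_of_le_one r_pos.le r_lt_one.le (by omega)
  have h3 : |ps ^ t - ps ^ (L + (L + t))| ≤ 2 * r ^ t := by linarith
  rw [div_le_iff₀ sqrt5_pos]
  nlinarith [pow_pos r_pos t, sqrt5_gt_two]

/-- high-frequency bound -/
lemma term_bound_high (L m : ℕ) (h : m ≤ L) :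
    r ^ L * (Nat.fib m : ℝ) ≤ r ^ (L - m) := by
  have h1 : r ^ L * (Nat.fib m : ℝ) ≤ r ^ L * ph ^ m :=
    mul_le_mul_of_nonneg_left (fib_le_ph_pow m) (pow_pos r_pos L).le
  have h2 : r ^ L = r ^ (L - m) * r ^ m := by
    rw [← pow_add]; congr 1; omega
  rw [h2] at h1 ⊢
  calc r ^ (L - m) * r ^ m * (Nat.fib m : ℝ) ≤ r ^ (L - m) * r ^ m * ph ^ m := h1
  _ = r ^ (L - m) * (r ^ m * ph ^ m) := by ring
  _ = r ^ (L - m) := by rw [rpow_mul_ph_pow]; ring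

section Series

variable (L : ℕ → ℕ) (hgap : ∀ j, L j + 6 ≤ L (j+1)) (hL0 : 2 ≤ L 0) (heven : ∀ j, Even (L j))

include hgap in
lemma L_gap_le : ∀ i t, L i + 6 * t ≤ L (i + t) := by
  intro i t
  induction t with
  | zero => simp
  | succ t ih =>
    have h := hgap (i + t)
    have he : i + (t + 1) = (i + t) + 1 := by omega
    rw [he]
    omega

include hgap in
lemma L_le_of_le {i j : ℕ} (h : i ≤ j) : L i + 6 * (j - i) ≤ L j := by
  have := L_gap_le L hgap i (j - i)
  have hij : i + (j - i) = j := by omega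
  rw [hij] at this
  exact this

include hgap in
lemma self_le_L : ∀ j, j ≤ L j := by
  intro j
  have := L_le_of_le L hgap (Nat.zero_le j)
  omega

include hgap in
lemma summable_rL : Summable (fun j : ℕ => r ^ L j) := by
  apply Summable.of_nonneg_of_le (fun j => (pow_pos r_pos _).le)
    (fun j => pow_le_pow_of_le_one r_pos.le r_lt_one.le (self_le_L L hgap j))
  exact summable_geom

def alphaL : ℝ := ∑' j : ℕ, r ^ L j

include hgap in
lemma alphaL_pos : 0 < alphaL L :=
  Summable.tsum_pos (summable_rL L hgap) (fun j => (pow_pos r_pos _).le) 0 (pow_pos r_pos _)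

include hgap in
lemma summable_rL_shift (N : ℕ) : Summable (fun i : ℕ => r ^ L (i + N)) :=
  (summable_nat_add_iff N).mpr (summable_rL L hgap)

/-- tail of the series -/
def tailL (N : ℕ) : ℝ := ∑' i : ℕ, r ^ L (i + N)

include hgap in
lemma alphaL_eq_partial_add_tail (N : ℕ) :
    alphaL L = (∑ j ∈ Finset.range N, r ^ L j) + tailL L N :=
  (Summable.sum_add_tsum_nat_add N (summable_rL L hgap)).symm

include hgap in
lemma tailL_pos (N : ℕ) : 0 < tailL L N :=
  Summable.tsum_pos (summable_rL_shift L hgap N) (fun j => (pow_pos r_pos _).le) 0 (pow_pos r_pos _)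

include hgap in
lemma tailL_le (N : ℕ) : tailL L N ≤ ph ^ 2 * r ^ L N := by
  have h1 : ∀ i : ℕ, r ^ L (i + N) ≤ r ^ L N * r ^ i := by
    intro i
    rw [← pow_add]
    apply pow_le_pow_of_le_one r_pos.le r_lt_one.le
    have := L_le_of_le L hgap (show N ≤ i + N by omega)
    omega
  have h2 : Summable (fun i : ℕ => r ^ L N * r ^ i) := summable_geom.mul_left _
  calc tailL L N ≤ ∑' i : ℕ, r ^ L N * r ^ i :=
        Summable.tsum_le_tsum h1 (summable_rL_shift L hgap N) h2
  _ = r ^ L N * ph ^ 2 := by rw [tsum_mul_left, geom_sum]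
  _ = ph ^ 2 * r ^ L N := by ring

include hgap in
lemma tailL_sub (N : ℕ) : tailL L N - tailL L (N + 1) = r ^ L N := by
  have h := Summable.tsum_eq_zero_add (summable_rL_shift L hgap N)
  simp only [zero_add] at h
  have h2 : ∑' i : ℕ, r ^ L (i + 1 + N) = tailL L (N + 1) :=
    tsum_congr (fun i => by rw [show i + 1 + N = i + (N + 1) from by omega])
  rw [h2] at h
  have h3 : tailL L N = r ^ L N + tailL L (N + 1) := h
  linarith

include hgap heven in
lemma approx (n m dd : ℕ) (h1 : L n + dd + 3 ≤ m) (h2 : m + dd + 2 ≤ L (n+1)) :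
    |alphaL L * (Nat.fib m : ℝ) -
      (∑ j ∈ Finset.range (n+1), (Nat.fib (m - L j) : ℝ))| ≤ 2 * r ^ dd := by
  have hfib : (0:ℝ) ≤ (Nat.fib m : ℝ) := Nat.cast_nonneg _
  have hsum : Summable (fun j : ℕ => r ^ L j * (Nat.fib m : ℝ)) :=
    (summable_rL L hgap).mul_right _
  have he : alphaL L * (Nat.fib m : ℝ) = ∑' j : ℕ, r ^ L j * (Nat.fib m : ℝ) :=
    tsum_mul_right.symm
  have hsplit := Summable.sum_add_tsum_nat_add (f := fun j => r ^ L j * (Nat.fib m : ℝ)) (n+1) hsum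
  set T := ∑' i : ℕ, r ^ L (i + (n+1)) * (Nat.fib m : ℝ) with hT
  set Z := ∑ j ∈ Finset.range (n+1), (Nat.fib (m - L j) : ℝ) with hZ
  have key : alphaL L * (Nat.fib m : ℝ) - Z =
      (∑ j ∈ Finset.range (n+1), (r ^ L j * (Nat.fib m : ℝ) - (Nat.fib (m - L j) : ℝ))) + T := by
    rw [he, ← hsplit, hZ, Finset.sum_sub_distrib]
    ring
  -- bound the finite part
  have hA : |∑ j ∈ Finset.range (n+1), (r ^ L j * (Nat.fib m : ℝ) - (Nat.fib (m - L j) : ℝ))|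
      ≤ r ^ dd := by
    have hterm : ∀ j ∈ Finset.range (n+1),
        |r ^ L j * (Nat.fib m : ℝ) - (Nat.fib (m - L j) : ℝ)| ≤ r ^ (dd + 2 + (n - j)) := by
      intro j hj
      simp only [Finset.mem_range] at hj
      have hjn : j ≤ n := by omega
      have hLn := L_le_of_le L hgap hjn
      have hLjm : L j ≤ m := by omega
      have hmt : m = L j + (m - L j) := by omega
      have hb := term_bound (L j) (m - L j) (heven j)
      rw [← hmt] at hb
      refine hb.trans ?_
      apply pow_le_pow_of_le_one r_pos.le r_lt_one.le
      omega
    calc |∑ j ∈ Finset.range (n+1), (r ^ L j * (Nat.fib m : ℝ) - (Nat.fib (m - L j) : ℝ))|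
        ≤ ∑ j ∈ Finset.range (n+1), |r ^ L j * (Nat.fib m : ℝ) - (Nat.fib (m - L j) : ℝ)| :=
          Finset.abs_sum_le_sum_abs _ _
      _ ≤ ∑ j ∈ Finset.range (n+1), r ^ (dd + 2 + (n - j)) := Finset.sum_le_sum hterm
      _ = r ^ (dd + 2) * ∑ j ∈ Finset.range (n+1), r ^ (n - j) := by
          rw [Finset.mul_sum]
          apply Finset.sum_congr rfl
          intro j hj
          rw [← pow_add]
      _ = r ^ (dd + 2) * ∑ j ∈ Finset.range (n+1), r ^ j := by
          congr 1
          rw [← Finset.sum_range_reflect (fun i => r ^ i) (n+1)]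
          apply Finset.sum_congr rfl
          intro j hj
          congr 1
          all_goals omega
      _ ≤ r ^ (dd + 2) * ph ^ 2 := by
          apply mul_le_mul_of_nonneg_left _ (pow_pos r_pos _).le
          rw [← geom_sum]
          exact Summable.sum_le_tsum _ (fun i _ => (pow_pos r_pos i).le) summable_geom
      _ = r ^ dd := by
          have : r ^ (dd + 2) = r ^ dd * r ^ 2 := by ring
          rw [this, mul_assoc, r_sq_mul_ph_sq, mul_one]
  -- bound the tail
  have hT0 : 0 ≤ T := tsum_nonneg (fun i => mul_nonneg (pow_pos r_pos _).le hfib)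
  have hTle : T ≤ r ^ dd := by
    have hterm : ∀ i : ℕ, r ^ L (i + (n+1)) * (Nat.fib m : ℝ) ≤ r ^ (dd + 2) * r ^ i := by
      intro i
      have hLl := L_le_of_le L hgap (show n + 1 ≤ i + (n+1) by omega)
      have hmL : m ≤ L (i + (n+1)) := by omega
      refine (term_bound_high _ _ hmL).trans ?_
      rw [← pow_add]
      apply pow_le_pow_of_le_one r_pos.le r_lt_one.le
      omega
    calc T ≤ ∑' i : ℕ, r ^ (dd + 2) * r ^ i := by
          apply Summable.tsum_le_tsum hterm _ (summable_geom.mul_left _)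
          exact ((summable_nat_add_iff (n+1)).mpr (summable_rL L hgap)).mul_right _
      _ = r ^ (dd + 2) * ph ^ 2 := by rw [tsum_mul_left, geom_sum]
      _ = r ^ dd := by
          have h : r ^ (dd + 2) = r ^ dd * r ^ 2 := by ring
          rw [h, mul_assoc, r_sq_mul_ph_sq, mul_one]
  calc |alphaL L * (Nat.fib m : ℝ) - Z|
      ≤ |∑ j ∈ Finset.range (n+1), (r ^ L j * (Nat.fib m : ℝ) - (Nat.fib (m - L j) : ℝ))| + |T| := by
        rw [key]; exact abs_add_le _ _
    _ ≤ r ^ dd + r ^ dd := by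
        refine add_le_add hA ?_
        rw [abs_of_nonneg hT0]
        exact hTle
    _ = 2 * r ^ dd := by ring

lemma ph_irrational : Irrational ph := by
  have h5 : Irrational (Real.sqrt 5) := (by norm_num : Nat.Prime 5).irrational_sqrt
  rintro ⟨q, hq⟩
  apply h5
  refine ⟨2 * q - 1, ?_⟩
  have hq' : (q : ℝ) = (1 + Real.sqrt 5) / 2 := hq
  push_cast
  linarith

lemma int_comb_eq_zero {p q : ℤ} (h : (p : ℝ) + (q : ℝ) * ph = 0) : p = 0 ∧ q = 0 := by
  by_cases hq : q = 0
  · subst hq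
    simp at h
    exact ⟨by exact_mod_cast h, rfl⟩
  · exfalso
    apply ph_irrational
    refine ⟨(-p : ℚ) / (q : ℚ), ?_⟩
    have hq' : ((q : ℚ) : ℝ) ≠ 0 := by exact_mod_cast hq
    push_cast
    rw [div_eq_iff (by exact_mod_cast hq')]
    push_cast
    linarith

include hgap hL0 heven in
lemma alphaL_not_int_comb (a b : ℤ) : alphaL L ≠ (a : ℝ) + (b : ℝ) * ph := by
  intro hab
  set P : ℕ → ℕ := fun N => ∑ j ∈ Finset.range N, Nat.fib (L j + 1) with hP
  set Q : ℕ → ℕ := fun N => ∑ j ∈ Finset.range N, Nat.fib (L j) with hQ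
  have hS : ∀ N, (∑ j ∈ Finset.range N, r ^ L j) = (P N : ℝ) - (Q N : ℝ) * ph := by
    intro N
    have hterm : ∀ j ∈ Finset.range N, r ^ L j =
        (Nat.fib (L j + 1) : ℝ) - (Nat.fib (L j) : ℝ) * ph :=
      fun j _ => by rw [r_pow_even _ (heven j), ps_pow]
    rw [Finset.sum_congr rfl hterm, Finset.sum_sub_distrib, ← Finset.sum_mul, hP, hQ]
    push_cast
    ring
  set A : ℕ → ℤ := fun N => a - (P N : ℤ) with hA
  set B : ℕ → ℤ := fun N => b + (Q N : ℤ) with hB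
  have htail : ∀ N, tailL L N = (A N : ℝ) + (B N : ℝ) * ph := by
    intro N
    have h := alphaL_eq_partial_add_tail L hgap N
    rw [hS N, hab] at h
    simp only [hA, hB]
    push_cast
    linarith
  set C : ℕ → ℝ := fun N => (A N : ℝ) + (B N : ℝ) * ps with hC
  have hnorm : ∀ N, tailL L N * C N = ((A N * A N + A N * B N - B N * B N : ℤ) : ℝ) := by
    intro N
    rw [htail N, hC]
    push_cast
    linear_combination ((A N : ℝ) * (B N : ℝ)) * ph_add_ps + ((B N : ℝ) * (B N : ℝ)) * ph_mul_ps
  have htailpos := tailL_pos L hgap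
  have htaille := tailL_le L hgap
  have htail1 : ∀ N, tailL L N ≤ 1 := by
    intro N
    have h1 : r ^ L N ≤ r ^ 2 := by
      apply pow_le_pow_of_le_one r_pos.le r_lt_one.le
      have := L_le_of_le L hgap (Nat.zero_le N)
      omega
    calc tailL L N ≤ ph ^ 2 * r ^ L N := htaille N
    _ ≤ ph ^ 2 * r ^ 2 := mul_le_mul_of_nonneg_left h1 (pow_pos ph_pos 2).le
    _ = 1 := by rw [mul_comm]; exact r_sq_mul_ph_sq
  have hCne : ∀ N, C N ≠ 0 := by
    intro N hC0
    have hAeq : (A N : ℝ) = -(B N : ℝ) * ps := by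
      rw [hC] at hC0; simp only at hC0; linarith
    have ht : tailL L N = (B N : ℝ) * Real.sqrt 5 := by
      rw [htail N, hAeq, ← ph_sub_ps]; ring
    have hBne : B N ≠ 0 := by
      intro h0
      rw [h0] at ht
      simp at ht
      exact (htailpos N).ne' ht
    have h1 : (1 : ℝ) ≤ |(B N : ℝ)| := by
      have := Int.one_le_abs hBne
      exact_mod_cast this
    have h2 : tailL L N = |(B N : ℝ)| * Real.sqrt 5 := by
      rw [ht]
      rcases abs_cases ((B N : ℝ)) with ⟨he, _⟩ | ⟨he, hneg⟩
      · rw [he]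
      · exfalso
        have : (B N : ℝ) * Real.sqrt 5 < 0 :=
          mul_neg_of_neg_of_pos hneg sqrt5_pos
        linarith [htailpos N, ht]
    have : Real.sqrt 5 ≤ tailL L N := by
      rw [h2]
      nlinarith [sqrt5_pos]
    linarith [htail1 N, sqrt5_gt_two]
  have hlow : ∀ N, ph ^ L N ≤ ph ^ 2 * |C N| := by
    intro N
    have hne : A N * A N + A N * B N - B N * B N ≠ 0 := by
      intro h0
      have := hnorm N
      rw [h0] at this
      simp at this
      rcases this with h | h
      · exact (htailpos N).ne' h
      · exact hCne N h
    have h1 : (1 : ℝ) ≤ |((A N * A N + A N * B N - B N * B N : ℤ) : ℝ)| := by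
      have := Int.one_le_abs hne
      exact_mod_cast this
    rw [← hnorm N, abs_mul, abs_of_pos (htailpos N)] at h1
    have h2 : (1 : ℝ) ≤ ph ^ 2 * r ^ L N * |C N| := by
      calc (1 : ℝ) ≤ tailL L N * |C N| := h1
      _ ≤ ph ^ 2 * r ^ L N * |C N| :=
          mul_le_mul_of_nonneg_right (htaille N) (abs_nonneg _)
    have h3 := mul_le_mul_of_nonneg_left h2 (pow_pos ph_pos (L N)).le
    rw [mul_one] at h3
    calc ph ^ L N ≤ ph ^ L N * (ph ^ 2 * r ^ L N * |C N|) := h3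
    _ = (r ^ L N * ph ^ L N) * (ph ^ 2 * |C N|) := by ring
    _ = ph ^ 2 * |C N| := by rw [rpow_mul_ph_pow, one_mul]
  have hrec : ∀ N, C N = C (N + 1) + ph ^ L N := by
    intro N
    have hsub := tailL_sub L hgap N
    rw [htail N, htail (N + 1)] at hsub
    have hr : r ^ L N = (Nat.fib (L N + 1) : ℝ) - (Nat.fib (L N) : ℝ) * ph := by
      rw [r_pow_even _ (heven N), ps_pow]
    rw [hr] at hsub
    have hz := int_comb_eq_zero
      (p := A N - A (N + 1) - (Nat.fib (L N + 1) : ℤ))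
      (q := B N - B (N + 1) + (Nat.fib (L N) : ℤ))
      (by push_cast; linarith)
    obtain ⟨e1, e2⟩ := hz
    have e1' : (A N : ℝ) - (A (N + 1) : ℝ) = (Nat.fib (L N + 1) : ℝ) := by
      have : A N - A (N + 1) = (Nat.fib (L N + 1) : ℤ) := by omega
      exact_mod_cast this
    have e2' : (B N : ℝ) - (B (N + 1) : ℝ) = -(Nat.fib (L N) : ℝ) := by
      have : B N - B (N + 1) = -(Nat.fib (L N) : ℤ) := by omega
      exact_mod_cast this
    have hCC : C N - C (N + 1) = (Nat.fib (L N + 1) : ℝ) - (Nat.fib (L N) : ℝ) * ps := by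
      rw [hC]
      simp only
      linear_combination e1' + ps * e2'
    rw [← ph_pow_conj] at hCC
    linarith
  have hub : ∀ N, |C N| ≤ |C 0| + ∑ j ∈ Finset.range N, ph ^ L j := by
    intro N
    induction N with
    | zero => simp
    | succ N ih =>
      have h1 : C (N + 1) = C N - ph ^ L N := by rw [hrec N]; ring
      rw [Finset.sum_range_succ, h1]
      calc |C N - ph ^ L N| ≤ |C N| + |ph ^ L N| := abs_sub _ _
      _ ≤ (|C 0| + ∑ j ∈ Finset.range N, ph ^ L j) + ph ^ L N := by
          rw [abs_of_pos (pow_pos ph_pos _)]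
          exact add_le_add ih le_rfl
      _ = |C 0| + (∑ j ∈ Finset.range N, ph ^ L j + ph ^ L N) := by ring
  have hsumb : ∀ N, ∑ j ∈ Finset.range (N + 1), ph ^ L j ≤ ph ^ (L N + 2) := by
    intro N
    induction N with
    | zero =>
      rw [Finset.sum_range_one]
      exact pow_le_pow_right₀ one_lt_ph.le (by omega)
    | succ N ih =>
      rw [Finset.sum_range_succ]
      have h1 : ph ^ (L N + 2) ≤ ph ^ L (N + 1) :=
        pow_le_pow_right₀ one_lt_ph.le (by have := hgap N; omega)
      have h2 : ph ^ L (N + 1) + ph ^ L (N + 1) ≤ ph ^ (L (N + 1) + 2) := by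
        have : ph ^ (L (N + 1) + 2) = ph ^ L (N + 1) * ph ^ 2 := by ring
        rw [this]
        nlinarith [two_le_ph_sq, pow_pos ph_pos (L (N + 1))]
      linarith
  have hfin : ∀ N : ℕ, ph ^ N ≤ ph ^ 2 * |C 0| := by
    intro N
    have h1 := hlow (N + 1)
    have h2 := hub (N + 1)
    have h3 := hsumb N
    have h4 : |C (N + 1)| ≤ |C 0| + ph ^ (L N + 2) := le_trans h2 (by linarith)
    have h5 : ph ^ L (N + 1) ≤ ph ^ 2 * |C 0| + ph ^ (L N + 4) := by
      calc ph ^ L (N + 1) ≤ ph ^ 2 * |C (N + 1)| := h1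
      _ ≤ ph ^ 2 * (|C 0| + ph ^ (L N + 2)) :=
          mul_le_mul_of_nonneg_left h4 (pow_pos ph_pos 2).le
      _ = ph ^ 2 * |C 0| + ph ^ (L N + 4) := by ring
    have h6 : ph ^ (L N + 6) ≤ ph ^ L (N + 1) :=
      pow_le_pow_right₀ one_lt_ph.le (hgap N)
    have h7 : ph ^ (L N + 4) * ph ≤ ph ^ 2 * |C 0| := by
      have e1 : ph ^ (L N + 6) = ph ^ (L N + 4) * ph ^ 2 := by ring
      nlinarith [ph_sq, pow_pos ph_pos (L N + 4)]
    have h8 : ph ^ N ≤ ph ^ (L N + 4) * ph := by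
      rw [← pow_succ]
      apply pow_le_pow_right₀ one_lt_ph.le
      have := self_le_L L hgap N
      omega
    linarith
  obtain ⟨N, hN⟩ := pow_unbounded_of_one_lt (ph ^ 2 * |C 0|) one_lt_ph
  linarith [hfin N]

end Series

lemma afib_pow_mulVec (K : ℕ) :
    Afib ^ K *ᵥ ![1, 1] = ![(Nat.fib (K+2) : ℝ), (Nat.fib (K+1) : ℝ)] := by
  induction K with
  | zero => simp [Matrix.one_mulVec]
  | succ K ih =>
    rw [pow_succ', ← Matrix.mulVec_mulVec, ih]
    funext i
    fin_cases i <;>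
      simp [Afib, Matrix.mulVec, dotProduct, Nat.fib_add_two] <;> push_cast <;> ring

lemma esfib_ratio {v : Fin 2 → ℝ} (hv : v ∈ EsFib) : v 0 = ps * v 1 := by
  have hmul : ∀ x : Fin 2 → ℝ,
      (Afib *ᵥ x) 0 - ps * (Afib *ᵥ x) 1 = ph * (x 0 - ps * x 1) := by
    intro x
    have e0 : (Afib *ᵥ x) 0 = x 0 + x 1 := by
      simp [Afib, Matrix.mulVec, dotProduct, Fin.sum_univ_two]
    have e1 : (Afib *ᵥ x) 1 = x 0 := by
      simp [Afib, Matrix.mulVec, dotProduct, Fin.sum_univ_two]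
    rw [e0, e1]
    linear_combination (-(x 0)) * ph_add_ps + x 1 * ph_mul_ps
  have hiter : ∀ n : ℕ, (Afib ^ n *ᵥ v) 0 - ps * (Afib ^ n *ᵥ v) 1
      = ph ^ n * (v 0 - ps * v 1) := by
    intro n
    induction n with
    | zero => simp [Matrix.one_mulVec]
    | succ n ih =>
      rw [pow_succ', ← Matrix.mulVec_mulVec, hmul, ih]
      ring
  have h1 : Tendsto (fun n => (Afib ^ n *ᵥ v) 0) atTop (𝓝 0) := by
    have := tendsto_pi_nhds.mp hv 0
    simpa using this
  have h2 : Tendsto (fun n => (Afib ^ n *ᵥ v) 1) atTop (𝓝 0) := by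
    have := tendsto_pi_nhds.mp hv 1
    simpa using this
  have h0 : Tendsto (fun n => ph ^ n * (v 0 - ps * v 1)) atTop (𝓝 0) := by
    have h3 := h1.sub (h2.const_mul ps)
    simp only [mul_zero, sub_zero] at h3
    exact h3.congr (fun n => hiter n)
  by_contra hne
  have hne' : v 0 - ps * v 1 ≠ 0 := fun h => hne (by linarith [h])
  have habs : Tendsto (fun n => |ph ^ n * (v 0 - ps * v 1)|) atTop (𝓝 0) := by
    have := h0.abs
    simpa using this
  have hev := (habs.eventually_lt_const (abs_pos.mpr hne')).exists
  obtain ⟨n, hn⟩ := hev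
  rw [abs_mul, abs_of_pos (pow_pos ph_pos n)] at hn
  have hge : (1:ℝ) ≤ ph ^ n := one_le_pow₀ one_lt_ph.le
  nlinarith [abs_pos.mpr hne']

end FibAux

open FibAux in
/-- Corollary 6.3 (together with Proposition 6.2): given `ε_n ∈ (0, φ⁻¹]`, there are
integers `k_n ≥ 2` and a real `α > 0` with `α A^{K_n}(1,1)ᵀ = w_n + z_n`, `z_n ∈ ℤ²`,
`‖w_n‖ ≤ 4 ε_n`, where `K_n = k_2 + ⋯ + k_n`; moreover `α` can be chosen with
`α(1,1)ᵀ ∉ ℤ² + Eˢ`. -/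
theorem fibonacci_eigenvalue_construction (ε : ℕ → ℝ)
    (hε : ∀ n, 1 ≤ n → ε n ∈ Set.Ioc (0 : ℝ) (((1 + Real.sqrt 5) / 2)⁻¹)) :
    ∃ k : ℕ → ℕ, (∀ n, 2 ≤ n → 2 ≤ k n) ∧ ∃ α : ℝ, 0 < α ∧
      (∀ n, 2 ≤ n → ∃ (w : Fin 2 → ℝ) (z : Fin 2 → ℤ),
        (α • (Afib ^ (∑ i ∈ Finset.Icc 2 n, k i) *ᵥ ![1, 1])) =
          w + (fun i => (z i : ℝ)) ∧ ‖w‖ ≤ 4 * ε n) ∧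
      ¬ ∃ (z : Fin 2 → ℤ) (v : Fin 2 → ℝ), v ∈ EsFib ∧
        (α • (![1, 1] : Fin 2 → ℝ)) = (fun i => (z i : ℝ)) + v := by
  classical
  -- choose decay exponents
  have hd_ex : ∀ n : ℕ, ∃ m : ℕ, 0 < ε n → r ^ m ≤ ε n := by
    intro n
    by_cases h : 0 < ε n
    · obtain ⟨m, hm⟩ := exists_pow_lt_of_lt_one h r_lt_one
      exact ⟨m, fun _ => hm.le⟩
    · exact ⟨0, fun h' => absurd h' h⟩
  choose d hd using hd_ex
  -- the lacunary sequence L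
  set L : ℕ → ℕ := fun j => Nat.rec (motive := fun _ => ℕ) 2
    (fun n Ln => Ln + 2 * d n + 6) j with hLdef
  have hL0 : L 0 = 2 := rfl
  have hLs : ∀ n, L (n + 1) = L n + 2 * d n + 6 := fun n => rfl
  have hgap : ∀ j, L j + 6 ≤ L (j + 1) := by intro j; rw [hLs]; omega
  have heven : ∀ j, Even (L j) := by
    intro j
    induction j with
    | zero => exact ⟨1, rfl⟩
    | succ j ih =>
      obtain ⟨c, hc⟩ := ih
      exact ⟨c + d j + 3, by rw [hLs]; omega⟩
  -- the times k
  set k : ℕ → ℕ := fun n =>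
    if n ≤ 2 then L 2 + d 2 + 2
    else (L n + d n + 2) - (L (n - 1) + d (n - 1) + 2) with hkdef
  have hKmono : ∀ n, (L n + d n + 2) + 2 ≤ L (n + 1) + d (n + 1) + 2 := by
    intro n; rw [hLs]; omega
  have hsumk : ∀ n, 2 ≤ n → (∑ i ∈ Finset.Icc 2 n, k i) = L n + d n + 2 := by
    intro n hn
    induction n with
    | zero => omega
    | succ n ih =>
      by_cases h2 : n + 1 = 2
      · rw [h2]
        rw [show Finset.Icc 2 2 = {2} from rfl, Finset.sum_singleton]
        simp only [hkdef, if_pos (le_refl 2)]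
      · have hn2 : 2 ≤ n := by omega
        rw [Finset.sum_Icc_succ_top (by omega : 2 ≤ n + 1), ih hn2]
        have hmono := hKmono n
        simp only [hkdef, if_neg (by omega : ¬ n + 1 ≤ 2)]
        have : n + 1 - 1 = n := by omega
        rw [this]
        omega
  refine ⟨k, ?_, ?_⟩
  · intro n hn
    by_cases h2 : n = 2
    · subst h2
      simp only [hkdef, if_pos (le_refl 2)]
      omega
    · have h3 : 3 ≤ n := by omega
      have hmono := hKmono (n - 1)
      have hn1 : n - 1 + 1 = n := by omega
      rw [hn1] at hmono
      simp only [hkdef, if_neg (by omega : ¬ n ≤ 2)]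
      omega
  refine ⟨alphaL L, alphaL_pos L hgap, ?_, ?_⟩
  · -- approximation at the times K n
    intro n hn
    rw [hsumk n hn]
    set Kn := L n + d n + 2 with hKn
    have happrox1 := approx L hgap heven n (Kn + 2) (d n) (by omega) (by rw [hLs]; omega)
    have happrox2 := approx L hgap heven n (Kn + 1) (d n) (by omega) (by rw [hLs]; omega)
    set Z1 : ℤ := ∑ j ∈ Finset.range (n + 1), (Nat.fib (Kn + 2 - L j) : ℤ) with hZ1
    set Z2 : ℤ := ∑ j ∈ Finset.range (n + 1), (Nat.fib (Kn + 1 - L j) : ℤ) with hZ2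
    have hc1 : ((Z1 : ℤ) : ℝ) = ∑ j ∈ Finset.range (n + 1), (Nat.fib (Kn + 2 - L j) : ℝ) := by
      rw [hZ1]; push_cast; rfl
    have hc2 : ((Z2 : ℤ) : ℝ) = ∑ j ∈ Finset.range (n + 1), (Nat.fib (Kn + 1 - L j) : ℝ) := by
      rw [hZ2]; push_cast; rfl
    refine ⟨![alphaL L * (Nat.fib (Kn + 2) : ℝ) - (Z1 : ℝ),
              alphaL L * (Nat.fib (Kn + 1) : ℝ) - (Z2 : ℝ)], ![Z1, Z2], ?_, ?_⟩
    · rw [afib_pow_mulVec]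
      funext i
      fin_cases i <;>
        simp [Pi.smul_apply, smul_eq_mul]
    · have hεn : 0 < ε n := (hε n (by omega)).1
      have hrd : r ^ d n ≤ ε n := hd n hεn
      rw [pi_norm_le_iff_of_nonneg (by linarith)]
      intro i
      fin_cases i <;> simp only [Matrix.cons_val_zero, Matrix.cons_val_one, Matrix.head_cons,
        Real.norm_eq_abs]
      · rw [hc1]
        calc |alphaL L * (Nat.fib (Kn + 2) : ℝ) -
              ∑ j ∈ Finset.range (n + 1), (Nat.fib (Kn + 2 - L j) : ℝ)| ≤ 2 * r ^ d n :=
              happrox1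
        _ ≤ 4 * ε n := by linarith
      · rw [hc2]
        calc |alphaL L * (Nat.fib (Kn + 1) : ℝ) -
              ∑ j ∈ Finset.range (n + 1), (Nat.fib (Kn + 1 - L j) : ℝ)| ≤ 2 * r ^ d n :=
              happrox2
        _ ≤ 4 * ε n := by linarith
  · -- non-membership in ℤ² + Eˢ
    rintro ⟨z, v, hvE, heq⟩
    have h0 : alphaL L = (z 0 : ℝ) + v 0 := by
      have := congrFun heq 0
      simpa using this
    have h1 : alphaL L = (z 1 : ℝ) + v 1 := by
      have := congrFun heq 1
      simpa using this
    have hratio : v 0 = ps * v 1 := esfib_ratio hvE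
    apply alphaL_not_int_comb L hgap (by rw [hL0]) heven (2 * z 1 - z 0) (z 0 - z 1)
    have hrel : alphaL L - (z 0 : ℝ) = ps * (alphaL L - (z 1 : ℝ)) := by
      rw [show alphaL L - (z 0 : ℝ) = v 0 by linarith,
          show alphaL L - (z 1 : ℝ) = v 1 by linarith]
      exact hratio
    have hphne : ph ≠ 0 := ph_pos.ne'
    apply mul_right_cancel₀ hphne
    push_cast
    linear_combination hrel + (alphaL L - (z 1 : ℝ)) * ph_add_ps +
      ((z 1 : ℝ) - (z 0 : ℝ)) * ph_sq
end
end

section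
/- Let (X,T) be a Cantor minimal system equipped with a proper nested Kakutani–Rohlin structure of Toeplitz type, with all towers at level n of common height p_n. Then, for α ∈ ℝ, exp(2iπα) is a continuous eigenvalue of (X,T) if and only if there exist n ≥ 1 and a ∈ ℤ with α = a/p_n. -/
open MeasureTheory Filter Topology Set Pointwise

noncomputable section

variable {X : Type} [TopologicalSpace X]

/-! ### Auxiliary lemmas for the proof of Theorem 7.1 -/

private lemma cos_rigidity_aux (θ : ℝ)
    (hθ : ∀ k : ℕ, 1 ≤ k → 1/2 < Real.cos (2 * Real.pi * (k * θ))) :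
    ∃ a : ℤ, θ = a := by
  set s : ℝ := θ - round θ with hs
  have hcos : ∀ k : ℕ, Real.cos (2 * Real.pi * (k * θ)) = Real.cos (2 * Real.pi * (k * |s|)) := by
    intro k
    have h1 : 2 * Real.pi * (k * θ) = 2 * Real.pi * (k * s) + (k * round θ : ℤ) * (2 * Real.pi) := by
      push_cast; ring
    rw [h1, Real.cos_add_int_mul_two_pi]
    rcases abs_cases s with ⟨h, _⟩ | ⟨h, _⟩
    · rw [h]
    · rw [h]
      rw [show 2 * Real.pi * (↑k * -s) = -(2 * Real.pi * (↑k * s)) by ring, Real.cos_neg]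
  rcases eq_or_lt_of_le (abs_nonneg s) with h0 | h0
  · refine ⟨round θ, ?_⟩
    have h1 : |s| = 0 := h0.symm
    rw [abs_eq_zero] at h1
    rw [hs] at h1
    linarith
  · exfalso
    have hs2 : |s| ≤ 1/2 := abs_sub_round θ
    have hpi := Real.pi_pos
    have h16 : |s| < 1/6 := by
      by_contra hge
      push_neg at hge
      have h1 := hθ 1 le_rfl
      rw [hcos 1] at h1
      have harg : Real.pi / 3 ≤ 2 * Real.pi * (1 * |s|) := by
        rw [one_mul]; nlinarith
      have harg2 : 2 * Real.pi * (1 * |s|) ≤ Real.pi := by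
        rw [one_mul]; nlinarith
      have := Real.cos_le_cos_of_nonneg_of_le_pi (by positivity) harg2 harg
      rw [Real.cos_pi_div_three] at this
      push_cast at h1
      linarith
  
    have hex : ∃ k : ℕ, 1/6 ≤ (k : ℝ) * |s| := by
      obtain ⟨m, hm⟩ := exists_nat_ge (1/6 / |s|)
      exact ⟨m, by rw [div_le_iff₀ h0] at hm; linarith⟩
    classical
    set k₀ := Nat.find hex with hk₀def
    have hk₀ : 1/6 ≤ (k₀ : ℝ) * |s| := Nat.find_spec hex
    have hk₀pos : 1 ≤ k₀ := by
      rcases Nat.eq_zero_or_pos k₀ with h | h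
      · exfalso; rw [h] at hk₀; norm_num at hk₀
      · exact h
    have hprev : ¬ (1/6 ≤ ((k₀ - 1 : ℕ) : ℝ) * |s|) := Nat.find_min hex (by omega)
    push_neg at hprev
    have hcast : ((k₀ - 1 : ℕ) : ℝ) = (k₀ : ℝ) - 1 := by
      have h1 : (1 : ℕ) ≤ k₀ := hk₀pos
      push_cast [Nat.cast_sub h1]; ring
    rw [hcast] at hprev
    have hup : (k₀ : ℝ) * |s| < 1/3 := by nlinarith
    have h1 := hθ k₀ hk₀pos
    rw [hcos k₀] at h1
    have harg : Real.pi / 3 ≤ 2 * Real.pi * (↑k₀ * |s|) := by nlinarith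
    have harg2 : 2 * Real.pi * (↑k₀ * |s|) ≤ Real.pi := by nlinarith
    have := Real.cos_le_cos_of_nonneg_of_le_pi (by positivity) harg2 harg
    rw [Real.cos_pi_div_three] at this
    linarith

private lemma abs_exp_sub_one_cos_aux (t : ℝ)
    (h : ‖Complex.exp (t * Complex.I) - 1‖ < 1) :
    1/2 < Real.cos t := by
  have hsq : ‖Complex.exp (t * Complex.I) - 1‖ ^ 2 = 2 - 2 * Real.cos t := by
    rw [Complex.sq_norm, Complex.normSq_apply]
    simp only [Complex.sub_re, Complex.sub_im, Complex.exp_ofReal_mul_I_re,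
      Complex.exp_ofReal_mul_I_im, Complex.one_re, Complex.one_im]
    nlinarith [Real.sin_sq_add_cos_sq t]
  nlinarith [norm_nonneg (Complex.exp (t * Complex.I) - 1)]

section AuxKR

variable {X : Type} [TopologicalSpace X] {T : X ≃ₜ X} {C : ℕ → ℕ} {B : ℕ → ℕ → Set X}
  {h : ℕ → ℕ → ℕ} {p : ℕ → ℕ}

private lemma piece_ex (hKR : KRStruct T C B h)
    (hToeplitz : ∀ n, 1 ≤ n → ∀ k, 1 ≤ k → k ≤ C n → h n k = p n)
    {n : ℕ} (hn : 1 ≤ n) (x : X) :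
    ∃ k j, 1 ≤ k ∧ k ≤ C n ∧ j < p n ∧ (T : X → X)^[j] x ∈ B n k := by
  have hcov := hKR.towers_cover n hn
  have hx : x ∈ (⋃ k ∈ Set.Icc 1 (C n), ⋃ j ∈ Set.Iio (h n k), (T : X → X)^[j] ⁻¹' B n k) := by
    rw [hcov]; exact Set.mem_univ x
  simp only [Set.mem_iUnion, Set.mem_Icc, Set.mem_Iio, Set.mem_preimage] at hx
  obtain ⟨k, ⟨hk1, hk2⟩, j, hj, hmem⟩ := hx
  exact ⟨k, j, hk1, hk2, by rwa [hToeplitz n hn k hk1 hk2] at hj, hmem⟩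

private lemma piece_unique (hKR : KRStruct T C B h)
    (hToeplitz : ∀ n, 1 ≤ n → ∀ k, 1 ≤ k → k ≤ C n → h n k = p n)
    {n : ℕ} (hn : 1 ≤ n) (x : X) {k j k' j' : ℕ}
    (hk1 : 1 ≤ k) (hk2 : k ≤ C n) (hj : j < p n)
    (hk1' : 1 ≤ k') (hk2' : k' ≤ C n) (hj' : j' < p n)
    (hm : (T : X → X)^[j] x ∈ B n k) (hm' : (T : X → X)^[j'] x ∈ B n k') :
    k = k' ∧ j = j' := by
  by_cases heq : (k, j) = (k', j')
  · exact ⟨congrArg Prod.fst heq, congrArg Prod.snd heq⟩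
  · exfalso
    have hd := hKR.towers_disjoint n hn k j k' j' hk1 hk2
      (by rwa [hToeplitz n hn k hk1 hk2]) hk1' hk2'
      (by rwa [hToeplitz n hn k' hk1' hk2']) heq
    exact Set.disjoint_left.mp hd hm hm'

private lemma step_base (hKR : KRStruct T C B h)
    (hToeplitz : ∀ n, 1 ≤ n → ∀ k, 1 ≤ k → k ≤ C n → h n k = p n)
    {n : ℕ} (hn : 1 ≤ n) {x : X} {k : ℕ} (hk1 : 1 ≤ k) (hk2 : k ≤ C n)
    (hx : x ∈ B n k) :
    ∃ k', 1 ≤ k' ∧ k' ≤ C n ∧ (T : X → X)^[p n - 1] (T x) ∈ B n k' := by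
  obtain ⟨k', j', hk1', hk2', hj', hmem⟩ := piece_ex hKR hToeplitz hn (T x)
  have hx0 : (T : X → X)^[0] x ∈ B n k := by rwa [Function.iterate_zero_apply]
  have hj'eq : j' = p n - 1 := by
    by_contra hne
    have h1 : j' + 1 < p n := by omega
    have hmem' : (T : X → X)^[j' + 1] x ∈ B n k' := by
      rw [Function.iterate_succ_apply]; exact hmem
    have := (piece_unique hKR hToeplitz hn x hk1 hk2 (by omega) hk1' hk2' h1 hx0 hmem').2
    omega
  exact ⟨k', hk1', hk2', by rwa [hj'eq] at hmem⟩

private lemma step_in {n : ℕ} {x : X} {k j : ℕ}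
    (hmem : (T : X → X)^[j + 1] x ∈ B n k) :
    (T : X → X)^[j] (T x) ∈ B n k := by
  rwa [← Function.iterate_succ_apply]

private lemma period_base (hKR : KRStruct T C B h)
    (hToeplitz : ∀ n, 1 ≤ n → ∀ k, 1 ≤ k → k ≤ C n → h n k = p n)
    {n : ℕ} (hn : 1 ≤ n) (hpn : 1 ≤ p n) {x : X}
    (hx : ∃ k, 1 ≤ k ∧ k ≤ C n ∧ x ∈ B n k) :
    ∃ k, 1 ≤ k ∧ k ≤ C n ∧ (T : X → X)^[p n] x ∈ B n k := by
  have haux : ∀ i, 1 ≤ i → i ≤ p n →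
      ∃ k', 1 ≤ k' ∧ k' ≤ C n ∧ (T : X → X)^[p n - i] ((T : X → X)^[i] x) ∈ B n k' := by
    intro i
    induction i with
    | zero => omega
    | succ i ih =>
      intro _ hle
      rcases Nat.eq_zero_or_pos i with hi0 | hi1
      · subst hi0
        obtain ⟨k, hk1, hk2, hxk⟩ := hx
        obtain ⟨k', hk1', hk2', hmem⟩ := step_base hKR hToeplitz hn hk1 hk2 hxk
        refine ⟨k', hk1', hk2', ?_⟩
        rwa [Function.iterate_one]
      · obtain ⟨k', hk1', hk2', hmem⟩ := ih hi1 (by omega)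
        have hrw : p n - i = (p n - (i + 1)) + 1 := by omega
        rw [hrw] at hmem
        have hst := step_in (T := T) (B := B) hmem
        refine ⟨k', hk1', hk2', ?_⟩
        rwa [Function.iterate_succ_apply']
  obtain ⟨k', hk1', hk2', hmem⟩ := haux (p n) hpn le_rfl
  rw [Nat.sub_self, Function.iterate_zero_apply] at hmem
  exact ⟨k', hk1', hk2', hmem⟩

end AuxKR


/-- Theorem 7.1: for a Cantor minimal system of Toeplitz type with common tower heights
`p_n` at level `n`, `exp(2iπα)` is a continuous eigenvalue iff `α = a/p_n` for some
`n ≥ 1` and `a ∈ ℤ`. -/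
theorem toeplitz_continuous_eigenvalues
    {X : Type} [TopologicalSpace X] (T : X ≃ₜ X) (hCM : CantorMinimal T)
    (C : ℕ → ℕ) (B : ℕ → ℕ → Set X) (h : ℕ → ℕ → ℕ) (hKR : KRStruct T C B h)
    (p : ℕ → ℕ) (hp_pos : ∀ n, 1 ≤ n → 1 ≤ p n) (hp_one : p 1 = 1)
    (hToeplitz : ∀ n, 1 ≤ n → ∀ k, 1 ≤ k → k ≤ C n → h n k = p n)
    (hdvd : ∀ n, 2 ≤ n → p (n - 1) ∣ p n)
    (α : ℝ) :
    ContEigenvalue T (Complex.exp (2 * Real.pi * Complex.I * α)) ↔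
      ∃ n, 1 ≤ n ∧ ∃ a : ℤ, α = (a : ℝ) / (p n : ℝ) := by
  obtain ⟨hComp, hMetr, hTD, hNe, hNI, hMin⟩ := hCM
  haveI := hComp
  constructor
  · -- necessity
    rintro ⟨f, hf, hf0, heig⟩
    set lam := Complex.exp (2 * Real.pi * Complex.I * α) with hlamdef
    have hlamabs : ‖lam‖ = 1 := by
      rw [hlamdef, Complex.norm_exp]
      have hre : (2 * (Real.pi : ℂ) * Complex.I * (α : ℂ)).re = 0 := by
        simp [Complex.mul_re, Complex.mul_im]
      rw [hre, Real.exp_zero]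
    obtain ⟨x₁, hx₁⟩ := Function.ne_iff.mp hf0
    have hfx₁pos : 0 < ‖f x₁‖ := norm_pos_iff.mpr hx₁
    have hfwd : ∀ m, ‖f ((T : X → X)^[m] x₁)‖ = ‖f x₁‖ := by
      intro m
      induction m with
      | zero => rw [Function.iterate_zero_apply]
      | succ m ih => rw [Function.iterate_succ_apply', heig, norm_mul, hlamabs, one_mul, ih]
    have hbwd : ∀ m, ‖f ((T.symm : X → X)^[m] x₁)‖ = ‖f x₁‖ := by
      intro m
      induction m with
      | zero => rw [Function.iterate_zero_apply]
      | succ m ih =>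
        rw [Function.iterate_succ_apply']
        have h1 : f (T (T.symm ((T.symm : X → X)^[m] x₁)))
            = lam * f (T.symm ((T.symm : X → X)^[m] x₁)) := heig _
        rw [Homeomorph.apply_symm_apply] at h1
        have h2 := congrArg (‖·‖) h1
        rw [norm_mul, hlamabs, one_mul] at h2
        rw [← h2, ih]
    have hconst : ∀ y, ‖f y‖ = ‖f x₁‖ := by
      intro y
      have hcl : IsClosed {z : X | ‖f z‖ = ‖f x₁‖} :=
        isClosed_eq (continuous_norm.comp hf) continuous_const
      have hsub' : HOrbit T x₁ ⊆ {z : X | ‖f z‖ = ‖f x₁‖} := by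
        rintro z ⟨m, hm | hm⟩
        · rw [← hm]; exact hfwd m
        · rw [← hm]; exact hbwd m
      exact closure_minimal hsub' hcl ((hMin x₁) y)
    obtain ⟨x₀, hx₀⟩ := hKR.inter_singleton
    have hfx₀pos : 0 < ‖f x₀‖ := by rw [hconst x₀]; exact hfx₁pos
    have hx₀A : ∀ n, 1 ≤ n → x₀ ∈ ⋃ k ∈ Set.Icc 1 (C n), B n k := by
      intro n hn
      have hmem : x₀ ∈ ⋂ n ∈ {n : ℕ | 1 ≤ n}, ⋃ k ∈ Set.Icc 1 (C n), B n k := by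
        rw [hx₀]; exact Set.mem_singleton x₀
      exact Set.mem_iInter₂.mp hmem n hn
    have hA_iff : ∀ (n : ℕ) (x : X), x ∈ (⋃ k ∈ Set.Icc 1 (C n), B n k)
        ↔ ∃ k, 1 ≤ k ∧ k ≤ C n ∧ x ∈ B n k := by
      intro n x
      simp [Set.mem_iUnion, Set.mem_Icc, and_assoc]
    set U : Set X := f ⁻¹' Metric.ball (f x₀) (‖f x₀‖) with hUdef
    have hUopen : IsOpen U := Metric.isOpen_ball.preimage hf
    have hx₀U : x₀ ∈ U := by
      rw [hUdef]
      simp only [Set.mem_preimage, Metric.mem_ball, dist_self]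
      exact hfx₀pos
    have hAclosed : ∀ n, 1 ≤ n → IsClosed (⋃ k ∈ Set.Icc 1 (C n), B n k) := by
      intro n hn
      exact Set.Finite.isClosed_biUnion (Set.finite_Icc _ _)
        (fun k hk => (hKR.B_clopen n k hn (Set.mem_Icc.mp hk).1 (Set.mem_Icc.mp hk).2).isClosed)
    have hAmono : ∀ m n', 1 ≤ m → m ≤ n' →
        (⋃ k ∈ Set.Icc 1 (C n'), B n' k) ⊆ ⋃ k ∈ Set.Icc 1 (C m), B m k := by
      intro m n' hm hmn
      induction n' with
      | zero => omega
      | succ n' ih =>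
        rcases eq_or_lt_of_le hmn with heq | hlt
        · rw [heq]
        · have hmn' : m ≤ n' := by omega
          have h1 : 1 ≤ n' := le_trans hm hmn'
          exact (hKR.bases_nested n' h1).trans (ih hmn')
    have hshrink : ∃ N, 1 ≤ N ∧ (⋃ k ∈ Set.Icc 1 (C N), B N k) ⊆ U := by
      by_contra hcon
      push_neg at hcon
      set t : ℕ → Set X := fun i => (⋃ k ∈ Set.Icc 1 (C (i + 1)), B (i + 1) k) ∩ Uᶜ with ht
      have htne : ∀ i, (t i).Nonempty := by
        intro i
        have h1 := hcon (i + 1) (by omega)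
        rw [Set.not_subset] at h1
        obtain ⟨y, hy1, hy2⟩ := h1
        exact ⟨y, hy1, hy2⟩
      have htcl : ∀ i, IsClosed (t i) :=
        fun i => (hAclosed (i + 1) (by omega)).inter (isClosed_compl_iff.mpr hUopen)
      have htcp : ∀ i, IsCompact (t i) := fun i => (htcl i).isCompact
      have htdir : Directed (· ⊇ ·) t := by
        intro i j
        refine ⟨max i j, ?_, ?_⟩
        · exact Set.inter_subset_inter
            (hAmono (i + 1) (max i j + 1) (by omega) (by omega)) subset_rfl
        · exact Set.inter_subset_inter
            (hAmono (j + 1) (max i j + 1) (by omega) (by omega)) subset_rfl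
      obtain ⟨y, hy⟩ :=
        IsCompact.nonempty_iInter_of_directed_nonempty_isCompact_isClosed t htdir htne htcp htcl
      have hyA : ∀ n, 1 ≤ n → y ∈ ⋃ k ∈ Set.Icc 1 (C n), B n k := by
        intro n hn
        have h1 : y ∈ t (n - 1) := Set.mem_iInter.mp hy (n - 1)
        rw [ht] at h1
        simp only at h1
        have h2 : n - 1 + 1 = n := by omega
        rw [h2] at h1
        exact h1.1
      have hyU : y ∉ U := (Set.mem_iInter.mp hy 0).2
      have hyx₀ : y ∈ ({x₀} : Set X) := by
        rw [← hx₀]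
        exact Set.mem_iInter₂.mpr (fun n hn => hyA n hn)
      rw [Set.mem_singleton_iff] at hyx₀
      rw [hyx₀] at hyU
      exact hyU hx₀U
    obtain ⟨N, hN, hsub⟩ := hshrink
    have hpN : 1 ≤ p N := hp_pos N hN
    have hbase0 : ∃ k, 1 ≤ k ∧ k ≤ C N ∧ x₀ ∈ B N k := (hA_iff N x₀).mp (hx₀A N hN)
    have hmulmem : ∀ m : ℕ, ∃ k, 1 ≤ k ∧ k ≤ C N ∧ (T : X → X)^[m * p N] x₀ ∈ B N k := by
      intro m
      induction m with
      | zero => simpa using hbase0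
      | succ m ih =>
        have hstep := period_base hKR hToeplitz hN hpN ih
        have harith : (m + 1) * p N = p N + m * p N := by ring
        rw [harith, Function.iterate_add_apply]
        exact hstep
    have hiter : ∀ m : ℕ, f ((T : X → X)^[m] x₀) = lam ^ m * f x₀ := by
      intro m
      induction m with
      | zero => rw [Function.iterate_zero_apply, pow_zero, one_mul]
      | succ m ih =>
        rw [Function.iterate_succ_apply', heig, ih, pow_succ]
        ring
    have hkey : ∀ k : ℕ, 1 ≤ k → 1/2 < Real.cos (2 * Real.pi * (k * ((p N : ℝ) * α))) := by
      intro k hk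
      have hmemU : (T : X → X)^[k * p N] x₀ ∈ U := hsub ((hA_iff N _).mpr (hmulmem k))
      rw [hUdef] at hmemU
      simp only [Set.mem_preimage, Metric.mem_ball] at hmemU
      rw [hiter (k * p N), Complex.dist_eq] at hmemU
      have hfactor : lam ^ (k * p N) * f x₀ - f x₀ = (lam ^ (k * p N) - 1) * f x₀ := by ring
      rw [hfactor, norm_mul] at hmemU
      have habs1 : ‖lam ^ (k * p N) - 1‖ < 1 := by
        by_contra hge
        push_neg at hge
        nlinarith [hfx₀pos, norm_nonneg (lam ^ (k * p N) - 1)]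
      have hlampow : lam ^ (k * p N)
          = Complex.exp ((2 * Real.pi * (k * ((p N : ℝ) * α)) : ℝ) * Complex.I) := by
        rw [hlamdef, ← Complex.exp_nat_mul]
        congr 1
        push_cast
        ring
      rw [hlampow] at habs1
      exact abs_exp_sub_one_cos_aux _ habs1
    obtain ⟨a, ha⟩ := cos_rigidity_aux _ hkey
    refine ⟨N, hN, a, ?_⟩
    have hpNne : (p N : ℝ) ≠ 0 := by
      have : (0 : ℝ) < p N := by exact_mod_cast hpN
      linarith
    field_simp
    linarith [ha]
  · -- sufficiency
    rintro ⟨n, hn, a, hα⟩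
    have hpn : 1 ≤ p n := hp_pos n hn
    have hpnne : (p n : ℝ) ≠ 0 := by
      have : (0 : ℝ) < p n := by exact_mod_cast hpn
      linarith
    have hαpn : α * p n = a := by
      rw [hα]
      field_simp
    choose kd jd hk1 hk2 hjlt hmem using piece_ex hKR hToeplitz hn
    have hjd_unique : ∀ (x : X) (k' j' : ℕ), 1 ≤ k' → k' ≤ C n → j' < p n →
        (T : X → X)^[j'] x ∈ B n k' → jd x = j' := by
      intro x k' j' h1 h2 h3 h4
      exact (piece_unique hKR hToeplitz hn x (hk1 x) (hk2 x) (hjlt x) h1 h2 h3 (hmem x) h4).2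
    have hlc : IsLocallyConstant jd := by
      rw [IsLocallyConstant.iff_exists_open]
      intro x
      refine ⟨(T : X → X)^[jd x] ⁻¹' B n (kd x), ?_, ?_, ?_⟩
      · exact ((hKR.B_clopen n (kd x) hn (hk1 x) (hk2 x)).2).preimage (T.continuous.iterate _)
      · exact hmem x
      · intro y hy
        exact hjd_unique y (kd x) (jd x) (hk1 x) (hk2 x) (hjlt x) hy
    set g : ℕ → ℂ := fun m => Complex.exp (2 * (Real.pi : ℂ) * Complex.I * (-(α : ℂ) * m))
      with hgdef
    refine ⟨g ∘ jd, (hlc.comp g).continuous, ?_, ?_⟩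
    · intro h0
      obtain ⟨x⟩ := hNe
      have h1 := congrFun h0 x
      simp only [Function.comp_apply, Pi.zero_apply] at h1
      exact Complex.exp_ne_zero _ h1
    · intro x
      simp only [Function.comp_apply]
      cases hj : jd x with
      | zero =>
        have hxbase : x ∈ B n (kd x) := by
          have h1 := hmem x
          rwa [hj, Function.iterate_zero_apply] at h1
        obtain ⟨k', hk1', hk2', hmem'⟩ := step_base hKR hToeplitz hn (hk1 x) (hk2 x) hxbase
        have hjdTx : jd (T x) = p n - 1 :=
          hjd_unique (T x) k' (p n - 1) hk1' hk2' (by omega) hmem'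
        rw [hjdTx, hgdef]
        simp only []
        rw [← Complex.exp_add]
        apply Complex.exp_eq_exp_iff_exists_int.mpr
        refine ⟨-a, ?_⟩
        have hcast : ((p n - 1 : ℕ) : ℂ) = (p n : ℂ) - 1 := by
          push_cast [Nat.cast_sub hpn]
          ring
        rw [hcast]
        have hαc : (α : ℂ) * (p n : ℂ) = (a : ℂ) := by exact_mod_cast hαpn
        push_cast
        linear_combination (-(2 * (Real.pi : ℂ) * Complex.I)) * hαc
      | succ j' =>
        have hmem1 : (T : X → X)^[j' + 1] x ∈ B n (kd x) := by
          have h1 := hmem x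
          rwa [hj] at h1
        have hmem2 : (T : X → X)^[j'] (T x) ∈ B n (kd x) := step_in (T := T) (B := B) hmem1
        have hjlt' : j' < p n := by
          have h1 := hjlt x
          omega
        have hjdTx : jd (T x) = j' :=
          hjd_unique (T x) (kd x) j' (hk1 x) (hk2 x) hjlt' hmem2
        rw [hjdTx, hgdef]
        simp only []
        rw [← Complex.exp_add]
        apply Complex.exp_eq_exp_iff_exists_int.mpr
        refine ⟨0, ?_⟩
        push_cast
        ring

end
end
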